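/- arXiv:math/0010147 — 4 statements merged into one kernel-verified Lean document; each statement's English description precedes it below -/
import Mathlib

section
/- Let L₁ be the Lie subalgebra of the Borel subalgebra B(so(M)) generated by {H₁, H₂, A_{1,j}, A_{2,j} : j > i}. Then L₁ is Frobenius: the functional A* dual to A_{2,1} + A_{M-1,1} makes the form (x,y) ↦ A*([x,y]) nondegenerate on L₁. -/
open Matrix

attribute [local instance 100] LieRing.ofAssociativeRing

/-- The matrix unit `E_{i,j}`, with 1-based indices. -/
def Eu (M i j : ℕ) : Matrix (Fin M) (Fin M) ℂ :=
  Matrix.of fun k l => if k.1 + 1 = i ∧ l.1 + 1 = j then 1 else 0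

/-- `A_{i,j} = E_{i,j} - E_{M+1-j, M+1-i}` (1-based indices). -/
def Amat (M i j : ℕ) : Matrix (Fin M) (Fin M) ℂ :=
  Eu M i j - Eu M (M + 1 - j) (M + 1 - i)

/-- `H_i = (1/2)(E_{i,i} - E_{M+1-i,M+1-i})` (1-based indices). -/
noncomputable def Hmat (M i : ℕ) : Matrix (Fin M) (Fin M) ℂ :=
  (1 / 2 : ℂ) • (Eu M i i - Eu M (M + 1 - i) (M + 1 - i))

/-- The Lie subalgebra `L₁ ⊂ B(so(M))` generated by `H₁, H₂` and the `A_{1,j}, A_{2,j}` with `i < j`. -/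
def L1 (M : ℕ) : LieSubalgebra ℂ (Matrix (Fin M) (Fin M) ℂ) :=
  LieSubalgebra.lieSpan ℂ _
    ({Hmat M 1, Hmat M 2} ∪ {X | ∃ j, 1 < j ∧ j ≤ M ∧ X = Amat M 1 j}
      ∪ {X | ∃ j, 2 < j ∧ j ≤ M ∧ X = Amat M 2 j})

lemma mul_Eu_apply (M i j : ℕ) (hi1 : 1 ≤ i) (hiM : i ≤ M)
    (X : Matrix (Fin M) (Fin M) ℂ) (p q : Fin M) :
    (X * Eu M i j) p q = if q.1 + 1 = j then X p ⟨i - 1, by omega⟩ else 0 := by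
  rw [Matrix.mul_apply]
  by_cases hq : q.1 + 1 = j
  · rw [if_pos hq]
    rw [Finset.sum_eq_single (⟨i - 1, by omega⟩ : Fin M)]
    · simp [Eu, hq]; omega
    · intro c _ hc
      simp only [Eu, Matrix.of_apply]
      rw [if_neg, mul_zero]
      rintro ⟨h1, -⟩
      exact hc (Fin.ext (by simp only [Fin.val_mk]; omega))
    · intro h; exact absurd (Finset.mem_univ _) h
  · rw [if_neg hq]
    apply Finset.sum_eq_zero
    intro c _
    simp only [Eu, Matrix.of_apply]
    rw [if_neg, mul_zero]
    rintro ⟨-, h2⟩; exact hq h2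

lemma Eu_mul_apply (M i j : ℕ) (hj1 : 1 ≤ j) (hjM : j ≤ M)
    (X : Matrix (Fin M) (Fin M) ℂ) (p q : Fin M) :
    (Eu M i j * X) p q = if p.1 + 1 = i then X ⟨j - 1, by omega⟩ q else 0 := by
  rw [Matrix.mul_apply]
  by_cases hp : p.1 + 1 = i
  · rw [if_pos hp]
    rw [Finset.sum_eq_single (⟨j - 1, by omega⟩ : Fin M)]
    · simp [Eu, hp]; omega
    · intro c _ hc
      simp only [Eu, Matrix.of_apply]
      rw [if_neg, zero_mul]
      rintro ⟨-, h2⟩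
      exact hc (Fin.ext (by simp only [Fin.val_mk]; omega))
    · intro h; exact absurd (Finset.mem_univ _) h
  · rw [if_neg hp]
    apply Finset.sum_eq_zero
    intro c _
    simp only [Eu, Matrix.of_apply]
    rw [if_neg, zero_mul]
    rintro ⟨h1, -⟩; exact hp h1

lemma lie_Amat_apply (M i j : ℕ) (hi1 : 1 ≤ i) (hiM : i ≤ M) (hj1 : 1 ≤ j) (hjM : j ≤ M)
    (X : Matrix (Fin M) (Fin M) ℂ) (p q : Fin M) :
    ⁅X, Amat M i j⁆ p q =
      ((if q.1 + 1 = j then X p ⟨i - 1, by omega⟩ else 0)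
       - (if q.1 + 1 = M + 1 - i then X p ⟨M - j, by omega⟩ else 0))
      - ((if p.1 + 1 = i then X ⟨j - 1, by omega⟩ q else 0)
       - (if p.1 + 1 = M + 1 - j then X ⟨M - i, by omega⟩ q else 0)) := by
  rw [Ring.lie_def]
  unfold Amat
  rw [Matrix.mul_sub, Matrix.sub_mul]
  simp only [Matrix.sub_apply]
  rw [mul_Eu_apply M i j hi1 hiM, mul_Eu_apply M (M+1-j) (M+1-i) (by omega) (by omega),
      Eu_mul_apply M i j hj1 hjM, Eu_mul_apply M (M+1-j) (M+1-i) (by omega) (by omega)]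
  have e1 : M + 1 - j - 1 = M - j := by omega
  have e2 : M + 1 - i - 1 = M - i := by omega
  simp only [e1, e2]

lemma trace_Eu_mul (M i j : ℕ) (hi1 : 1 ≤ i) (hiM : i ≤ M) (hj1 : 1 ≤ j) (hjM : j ≤ M)
    (Z : Matrix (Fin M) (Fin M) ℂ) :
    Matrix.trace (Eu M i j * Z) = Z ⟨j - 1, by omega⟩ ⟨i - 1, by omega⟩ := by
  rw [Matrix.trace]
  rw [Finset.sum_eq_single (⟨i - 1, by omega⟩ : Fin M)]
  · rw [Matrix.diag_apply, Eu_mul_apply M i j hj1 hjM, if_pos (by simp only [Fin.val_mk]; omega)]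
  · intro c _ hc
    rw [Matrix.diag_apply, Eu_mul_apply M i j hj1 hjM, if_neg]
    intro h; exact hc (Fin.ext (by simp only [Fin.val_mk]; omega))
  · intro h; exact absurd (Finset.mem_univ _) h

lemma traceF (M : ℕ) (hM : 5 ≤ M) (Z : Matrix (Fin M) (Fin M) ℂ) :
    Matrix.trace ((Amat M 2 1 + Amat M (M - 1) 1) * Z) =
      Z ⟨0, by omega⟩ ⟨1, by omega⟩ + Z ⟨0, by omega⟩ ⟨M - 2, by omega⟩
      - Z ⟨M - 2, by omega⟩ ⟨M - 1, by omega⟩ - Z ⟨1, by omega⟩ ⟨M - 1, by omega⟩ := by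
  unfold Amat
  rw [add_mul, Matrix.sub_mul, Matrix.sub_mul, Matrix.trace_add, Matrix.trace_sub,
      Matrix.trace_sub]
  rw [trace_Eu_mul M 2 1 (by omega) (by omega) (by omega) (by omega),
      trace_Eu_mul M (M+1-1) (M+1-2) (by omega) (by omega) (by omega) (by omega),
      trace_Eu_mul M (M-1) 1 (by omega) (by omega) (by omega) (by omega),
      trace_Eu_mul M (M+1-1) (M+1-(M-1)) (by omega) (by omega) (by omega) (by omega)]
  have h1 : (1:ℕ) - 1 = 0 := rfl
  have h2 : (2:ℕ) - 1 = 1 := rfl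
  have h3 : M + 1 - 2 - 1 = M - 2 := by omega
  have h4 : M + 1 - 1 - 1 = M - 1 := by omega
  have h5 : M + 1 - (M - 1) - 1 = 1 := by omega
  have h6 : M - 1 - 1 = M - 2 := by omega
  simp only [h1, h2, h3, h4, h5, h6]
  ring

def goodZ (M : ℕ) (X : Matrix (Fin M) (Fin M) ℂ) : Prop :=
  ∀ a b : Fin M, (b.1 < a.1 ∨ (2 ≤ a.1 ∧ b.1 + 3 ≤ M)) → X a b = 0

def goodS (M : ℕ) (X : Matrix (Fin M) (Fin M) ℂ) : Prop :=
  ∀ a b : Fin M, X b.rev a.rev = - X a b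

/-- The enveloping (in fact bigger) Lie subalgebra cut out by the support/symmetry
conditions; `L1 M` is contained in it. -/
def W (M : ℕ) : LieSubalgebra ℂ (Matrix (Fin M) (Fin M) ℂ) where
  carrier := {X | goodZ M X ∧ goodS M X}
  add_mem' := by
    rintro X Y ⟨hX1, hX2⟩ ⟨hY1, hY2⟩
    constructor
    · intro a b h; simp [hX1 a b h, hY1 a b h]
    · intro a b; simp [hX2 a b, hY2 a b]; ring
  zero_mem' := by constructor <;> intro a b <;> simp
  smul_mem' := by
    rintro c X ⟨hX1, hX2⟩
    constructor
    · intro a b h; simp [hX1 a b h]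
    · intro a b; simp [hX2 a b]
  lie_mem' := by
    rintro X Y ⟨hX1, hX2⟩ ⟨hY1, hY2⟩
    constructor
    · intro a b h
      rw [Ring.lie_def, Matrix.sub_apply, Matrix.mul_apply, Matrix.mul_apply]
      rw [Finset.sum_eq_zero, Finset.sum_eq_zero, sub_zero]
      · intro c _
        rcases lt_or_ge c.1 a.1 with hc | hc
        · rw [hY1 a c (Or.inl hc), zero_mul]
        · rcases h with h | h
          · rw [hX1 c b (Or.inl (by omega)), mul_zero]
          · rw [hX1 c b (Or.inr ⟨by omega, h.2⟩), mul_zero]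
      · intro c _
        rcases lt_or_ge c.1 a.1 with hc | hc
        · rw [hX1 a c (Or.inl hc), zero_mul]
        · rcases h with h | h
          · rw [hY1 c b (Or.inl (by omega)), mul_zero]
          · rw [hY1 c b (Or.inr ⟨by omega, h.2⟩), mul_zero]
    · intro a b
      rw [Ring.lie_def, Matrix.sub_apply, Matrix.sub_apply,
          Matrix.mul_apply, Matrix.mul_apply, Matrix.mul_apply, Matrix.mul_apply]
      have r1 : (∑ c : Fin M, X b.rev c * Y c a.rev)
          = ∑ c : Fin M, Y a c * X c b := by
        rw [← Fintype.sum_equiv Fin.revPerm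
          (fun c : Fin M => Y a c * X c b)
          (fun c : Fin M => X b.rev c * Y c a.rev)
          (fun c => by simp only [Fin.revPerm_apply, hX2 c b, hY2 a c]; ring)]
      have r2 : (∑ c : Fin M, Y b.rev c * X c a.rev)
          = ∑ c : Fin M, X a c * Y c b := by
        rw [← Fintype.sum_equiv Fin.revPerm
          (fun c : Fin M => X a c * Y c b)
          (fun c : Fin M => Y b.rev c * X c a.rev)
          (fun c => by simp only [Fin.revPerm_apply, hY2 c b, hX2 a c]; ring)]
      rw [r1, r2]
      ring

lemma Amat_good (M i j : ℕ) (hM : 5 ≤ M) (hi1 : 1 ≤ i) (hi2 : i ≤ 2) (hij : i ≤ j)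
    (hjM : j ≤ M) : goodZ M (Amat M i j) ∧ goodS M (Amat M i j) := by
  constructor
  · intro a b h
    have ha := a.2; have hb := b.2
    simp only [Amat, Eu, Matrix.sub_apply, Matrix.of_apply]
    split_ifs with h1 h2 h2 <;> first | (exfalso; omega) | ring
  · intro a b
    have ha := a.2; have hb := b.2
    simp only [Amat, Eu, Matrix.sub_apply, Matrix.of_apply, Fin.val_rev]
    split_ifs with h1 h2 h2 h3 h4 h4 h5 h5 <;> first | (exfalso; omega) | ring

lemma Hmat_good (M i : ℕ) (hM : 5 ≤ M) (hi1 : 1 ≤ i) (hi2 : i ≤ 2) :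
    goodZ M (Hmat M i) ∧ goodS M (Hmat M i) := by
  obtain ⟨h1, h2⟩ := Amat_good M i i hM hi1 hi2 le_rfl (by omega)
  have e : Hmat M i = (1/2 : ℂ) • Amat M i i := rfl
  constructor
  · intro a b hb
    rw [e, Matrix.smul_apply, h1 a b hb, smul_zero]
  · intro a b
    rw [e, Matrix.smul_apply, Matrix.smul_apply, h2 a b, smul_neg]

lemma L1_le_W (M : ℕ) (hM : 5 ≤ M) : L1 M ≤ W M := by
  rw [L1, LieSubalgebra.lieSpan_le]
  rintro x ((hx | ⟨j, hj1, hj2, rfl⟩) | ⟨j, hj1, hj2, rfl⟩)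
  · rcases hx with rfl | rfl
    · exact Hmat_good M 1 hM (by omega) (by omega)
    · exact Hmat_good M 2 hM (by omega) (by omega)
  · exact Amat_good M 1 j hM (by omega) (by omega) (by omega) hj2
  · exact Amat_good M 2 j hM (by omega) (by omega) (by omega) hj2

lemma goodS_val (M : ℕ) (X : Matrix (Fin M) (Fin M) ℂ) (hS : goodS M X)
    (a b a' b' : Fin M) (h1 : a'.1 + b.1 + 1 = M) (h2 : b'.1 + a.1 + 1 = M) :
    X a' b' = - X a b := by
  have e := hS a b
  rw [show b.rev = a' from Fin.ext (by rw [Fin.val_rev]; omega),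
      show a.rev = b' from Fin.ext (by rw [Fin.val_rev]; omega)] at e
  exact e

section Eqs
variable (M : ℕ) (hM : 5 ≤ M) (X : Matrix (Fin M) (Fin M) ℂ)

lemma eqH1 (hZ : goodZ M X) (hS : goodS M X)
    (e : Matrix.trace ((Amat M 2 1 + Amat M (M - 1) 1) * ⁅X, Hmat M 1⁆) = 0) :
    X ⟨0, by omega⟩ ⟨1, by omega⟩ + X ⟨0, by omega⟩ ⟨M-2, by omega⟩ = 0 := by
  rw [show Hmat M 1 = (1/2 : ℂ) • Amat M 1 1 from rfl, lie_smul, Matrix.mul_smul,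
    Matrix.trace_smul, traceF M hM] at e
  simp only [lie_Amat_apply M 1 1 (by omega) (by omega) (by omega) (by omega) X] at e
  have c1 : ¬((1:ℕ) + 1 = 1) := by omega
  have c2 : ¬((1:ℕ) + 1 = M + 1 - 1) := by omega
  have c3 : ¬(M - 2 + 1 = 1) := by omega
  have c4 : ¬(M - 2 + 1 = M + 1 - 1) := by omega
  have c5 : ¬(M - 1 + 1 = 1) := by omega
  have c6 : (M - 1 + 1 = M + 1 - 1) = True := eq_true (by omega)
  have c8 : ¬((0:ℕ) + 1 = M + 1 - 1) := by omega
  simp only [c1, c2, c3, c4, c5, c6, c8, if_true, if_false, show (1:ℕ)-1 = 0 from rfl,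
    ite_true, ite_false, sub_zero, zero_sub, sub_neg_eq_add, zero_add, smul_eq_mul] at e
  have s1 : X ⟨M-2, by omega⟩ ⟨M-1, by omega⟩ = - X ⟨0, by omega⟩ ⟨1, by omega⟩ :=
    goodS_val M X hS _ _ _ _ (by simp only [Fin.val_mk]; omega) (by simp only [Fin.val_mk]; omega)
  have s2 : X ⟨1, by omega⟩ ⟨M-1, by omega⟩ = - X ⟨0, by omega⟩ ⟨M-2, by omega⟩ :=
    goodS_val M X hS _ _ _ _ (by simp only [Fin.val_mk]; omega) (by simp only [Fin.val_mk]; omega)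
  rw [s1, s2] at e
  try norm_num at e
  first | linear_combination e | linear_combination -e | linear_combination 2*e | linear_combination -2*e | linear_combination e/2 | linear_combination -e/2

lemma eqH2 (hZ : goodZ M X) (hS : goodS M X)
    (e : Matrix.trace ((Amat M 2 1 + Amat M (M - 1) 1) * ⁅X, Hmat M 2⁆) = 0) :
    X ⟨0, by omega⟩ ⟨1, by omega⟩ - X ⟨0, by omega⟩ ⟨M-2, by omega⟩ = 0 := by
  rw [show Hmat M 2 = (1/2 : ℂ) • Amat M 2 2 from rfl, lie_smul, Matrix.mul_smul,
    Matrix.trace_smul, traceF M hM] at e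
  simp only [lie_Amat_apply M 2 2 (by omega) (by omega) (by omega) (by omega) X] at e
  have c1 : ¬((1:ℕ) + 1 = M + 1 - 2) := by omega
  have c2 : ¬(M - 2 + 1 = 2) := by omega
  have c3 : (M - 2 + 1 = M + 1 - 2) = True := eq_true (by omega)
  have c4 : ¬(M - 1 + 1 = 2) := by omega
  have c5 : ¬(M - 1 + 1 = M + 1 - 2) := by omega
  have c6 : ¬((0:ℕ) + 1 = M + 1 - 2) := by omega
  simp only [c1, c2, c3, c4, c5, c6, if_true, if_false, show (2:ℕ)-1 = 1 from rfl,
    ite_true, ite_false, sub_zero, zero_sub, sub_neg_eq_add, zero_add, smul_eq_mul] at e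
  have s1 : X ⟨M-2, by omega⟩ ⟨M-1, by omega⟩ = - X ⟨0, by omega⟩ ⟨1, by omega⟩ :=
    goodS_val M X hS _ _ _ _ (by simp only [Fin.val_mk]; omega) (by simp only [Fin.val_mk]; omega)
  have s2 : X ⟨1, by omega⟩ ⟨M-1, by omega⟩ = - X ⟨0, by omega⟩ ⟨M-2, by omega⟩ :=
    goodS_val M X hS _ _ _ _ (by simp only [Fin.val_mk]; omega) (by simp only [Fin.val_mk]; omega)
  rw [s1, s2] at e
  try norm_num at e
  first | linear_combination e | linear_combination -e | linear_combination 2*e | linear_combination -2*e | linear_combination e/2 | linear_combination -e/2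

lemma eqA12 (hZ : goodZ M X) (hS : goodS M X)
    (e : Matrix.trace ((Amat M 2 1 + Amat M (M - 1) 1) * ⁅X, Amat M 1 2⁆) = 0) :
    X ⟨0, by omega⟩ ⟨0, by omega⟩ - X ⟨1, by omega⟩ ⟨1, by omega⟩ = 0 := by
  rw [traceF M hM] at e
  simp only [lie_Amat_apply M 1 2 (by omega) (by omega) (by omega) (by omega) X] at e
  have c1 : ¬((1:ℕ) + 1 = M + 1 - 1) := by omega
  have c2 : ¬(M - 2 + 1 = 2) := by omega
  have c3 : ¬(M - 2 + 1 = M + 1 - 1) := by omega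
  have c4 : ¬(M - 1 + 1 = 2) := by omega
  have c5 : (M - 1 + 1 = M + 1 - 1) = True := eq_true (by omega)
  have c6 : ¬((0:ℕ) + 1 = M + 1 - 2) := by omega
  have c7 : (M - 2 + 1 = M + 1 - 2) = True := eq_true (by omega)
  have c8 : ¬((1:ℕ) + 1 = M + 1 - 2) := by omega
  have cz1 : ¬(M - 2 + 1 = 1) := by omega
  have cz2 : ¬(M - 1 + 1 = 1) := by omega
  simp only [cz1, cz2, c1, c2, c3, c4, c5, c6, c7, c8, if_true, if_false, show (1:ℕ)-1 = 0 from rfl,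
    show (2:ℕ)-1 = 1 from rfl, ite_true, ite_false, sub_zero, zero_sub, sub_neg_eq_add,
    zero_add] at e
  have s0 : X ⟨1, by omega⟩ ⟨M-2, by omega⟩ = 0 := by
    have h' := goodS_val M X hS ⟨1, by omega⟩ ⟨M-2, by omega⟩ ⟨1, by omega⟩ ⟨M-2, by omega⟩
      (by simp only [Fin.val_mk]; omega) (by simp only [Fin.val_mk]; omega)
    linear_combination h' / 2
  have s1 : X ⟨M-2, by omega⟩ ⟨M-2, by omega⟩ = - X ⟨1, by omega⟩ ⟨1, by omega⟩ :=
    goodS_val M X hS _ _ _ _ (by simp only [Fin.val_mk]; omega) (by simp only [Fin.val_mk]; omega)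
  have s2 : X ⟨M-1, by omega⟩ ⟨M-1, by omega⟩ = - X ⟨0, by omega⟩ ⟨0, by omega⟩ :=
    goodS_val M X hS _ _ _ _ (by simp only [Fin.val_mk]; omega) (by simp only [Fin.val_mk]; omega)
  rw [s0, s1, s2] at e
  try norm_num at e
  first | linear_combination e | linear_combination -e | linear_combination 2*e | linear_combination -2*e | linear_combination e/2 | linear_combination -e/2

lemma eqA1M1 (hZ : goodZ M X) (hS : goodS M X)
    (e : Matrix.trace ((Amat M 2 1 + Amat M (M - 1) 1) * ⁅X, Amat M 1 (M-1)⁆) = 0) :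
    X ⟨0, by omega⟩ ⟨0, by omega⟩ + X ⟨1, by omega⟩ ⟨1, by omega⟩ = 0 := by
  rw [traceF M hM] at e
  simp only [lie_Amat_apply M 1 (M-1) (by omega) (by omega) (by omega) (by omega) X] at e
  have c1 : ¬((1:ℕ) + 1 = M - 1) := by omega
  have c2 : (M - 2 + 1 = M - 1) = True := eq_true (by omega)
  have c3 : ¬(M - 1 + 1 = M - 1) := by omega
  have c4 : ¬((1:ℕ) + 1 = M + 1 - 1) := by omega
  have c5 : ¬(M - 2 + 1 = M + 1 - 1) := by omega
  have c6 : (M - 1 + 1 = M + 1 - 1) = True := eq_true (by omega)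
  have c7 : ¬((0:ℕ) + 1 = M + 1 - (M - 1)) := by omega
  have c8 : ¬(M - 2 + 1 = M + 1 - (M - 1)) := by omega
  have c9 : ((1:ℕ) + 1 = M + 1 - (M - 1)) = True := eq_true (by omega)
  have d1 : M - 1 - 1 = M - 2 := by omega
  have d2 : M - (M - 1) = 1 := by omega
  have cz1 : ¬(M - 2 + 1 = 1) := by omega
  have cz2 : ¬(M - 1 + 1 = 1) := by omega
  simp only [cz1, cz2, c1, c2, c3, c4, c5, c6, c7, c8, c9, d1, d2, if_true, if_false,
    show (1:ℕ)-1 = 0 from rfl, ite_true, ite_false, sub_zero, zero_sub, sub_neg_eq_add,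
    zero_add] at e
  have z1 : X ⟨M-2, by omega⟩ ⟨1, by omega⟩ = 0 :=
    hZ _ _ (Or.inr ⟨by simp only [Fin.val_mk]; omega, by simp only [Fin.val_mk]; omega⟩)
  have s1 : X ⟨M-2, by omega⟩ ⟨M-2, by omega⟩ = - X ⟨1, by omega⟩ ⟨1, by omega⟩ :=
    goodS_val M X hS _ _ _ _ (by simp only [Fin.val_mk]; omega) (by simp only [Fin.val_mk]; omega)
  have s2 : X ⟨M-1, by omega⟩ ⟨M-1, by omega⟩ = - X ⟨0, by omega⟩ ⟨0, by omega⟩ :=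
    goodS_val M X hS _ _ _ _ (by simp only [Fin.val_mk]; omega) (by simp only [Fin.val_mk]; omega)
  rw [z1, s1, s2] at e
  try norm_num at e
  first | linear_combination e | linear_combination -e | linear_combination 2*e | linear_combination -2*e | linear_combination e/2 | linear_combination -e/2

lemma eqA1j (hZ : goodZ M X) (hS : goodS M X) (j : ℕ) (hj3 : 3 ≤ j) (hjM : j + 2 ≤ M)
    (e : Matrix.trace ((Amat M 2 1 + Amat M (M - 1) 1) * ⁅X, Amat M 1 j⁆) = 0) :
    X ⟨1, by omega⟩ ⟨M - j, by omega⟩ = 0 := by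
  rw [traceF M hM] at e
  simp only [lie_Amat_apply M 1 j (by omega) (by omega) (by omega) (by omega) X] at e
  have c1 : ¬((1:ℕ) + 1 = j) := by omega
  have c2 : ¬(M - 2 + 1 = j) := by omega
  have c3 : ¬(M - 1 + 1 = j) := by omega
  have c4 : ¬((1:ℕ) + 1 = M + 1 - 1) := by omega
  have c5 : ¬(M - 2 + 1 = M + 1 - 1) := by omega
  have c6 : (M - 1 + 1 = M + 1 - 1) = True := eq_true (by omega)
  have c7 : ¬((0:ℕ) + 1 = M + 1 - j) := by omega
  have c8 : ¬(M - 2 + 1 = M + 1 - j) := by omega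
  have c9 : ¬((1:ℕ) + 1 = M + 1 - j) := by omega
  have cz1 : ¬(M - 2 + 1 = 1) := by omega
  have cz2 : ¬(M - 1 + 1 = 1) := by omega
  simp only [cz1, cz2, c1, c2, c3, c4, c5, c6, c7, c8, c9, if_true, if_false,
    show (1:ℕ)-1 = 0 from rfl, ite_true, ite_false, sub_zero, zero_sub, sub_neg_eq_add,
    zero_add] at e
  have z1 : X ⟨j-1, by omega⟩ ⟨1, by omega⟩ = 0 :=
    hZ _ _ (Or.inr ⟨by simp only [Fin.val_mk]; omega, by simp only [Fin.val_mk]; omega⟩)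
  have z2 : X ⟨M-2, by omega⟩ ⟨M-j, by omega⟩ = 0 :=
    hZ _ _ (Or.inr ⟨by simp only [Fin.val_mk]; omega, by simp only [Fin.val_mk]; omega⟩)
  have s1 : X ⟨j-1, by omega⟩ ⟨M-2, by omega⟩ = - X ⟨1, by omega⟩ ⟨M-j, by omega⟩ :=
    goodS_val M X hS _ _ _ _ (by simp only [Fin.val_mk]; omega) (by simp only [Fin.val_mk]; omega)
  rw [z1, z2, s1] at e
  try norm_num at e
  first | linear_combination e | linear_combination -e | linear_combination 2*e | linear_combination -2*e | linear_combination e/2 | linear_combination -e/2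

lemma eqA2j (hZ : goodZ M X) (hS : goodS M X)
    (j : ℕ) (hj3 : 3 ≤ j) (hjM : j + 2 ≤ M)
    (e : Matrix.trace ((Amat M 2 1 + Amat M (M - 1) 1) * ⁅X, Amat M 2 j⁆) = 0) :
    X ⟨0, by omega⟩ ⟨M - j, by omega⟩ = 0 := by
  rw [traceF M hM] at e
  simp only [lie_Amat_apply M 2 j (by omega) (by omega) (by omega) (by omega) X] at e
  have c1 : ¬((1:ℕ) + 1 = j) := by omega
  have c2 : ¬(M - 2 + 1 = j) := by omega
  have c3 : ¬(M - 1 + 1 = j) := by omega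
  have c4 : ¬((1:ℕ) + 1 = M + 1 - 2) := by omega
  have c5 : (M - 2 + 1 = M + 1 - 2) = True := eq_true (by omega)
  have c6 : ¬(M - 1 + 1 = M + 1 - 2) := by omega
  have c7 : ¬((0:ℕ) + 1 = 2) := by omega
  have c8 : ¬(M - 2 + 1 = 2) := by omega
  have c9 : ¬((0:ℕ) + 1 = M + 1 - j) := by omega
  have c10 : ¬((1:ℕ) + 1 = M + 1 - j) := by omega
  have c11 : ¬(M - 2 + 1 = M + 1 - j) := by omega
  have cz1 : ¬(M - 2 + 1 = 1) := by omega
  have cz2 : ¬(M - 1 + 1 = 1) := by omega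
  have s1 : X ⟨j-1, by omega⟩ ⟨M-1, by omega⟩ = - X ⟨0, by omega⟩ ⟨M-j, by omega⟩ :=
    goodS_val M X hS _ _ _ _ (by simp only [Fin.val_mk]; omega) (by simp only [Fin.val_mk]; omega)
  simp only [cz1, cz2, c1, c2, c3, c4, c5, c6, c7, c8, c9, c10, c11, if_true, if_false,
    show (2:ℕ)-1 = 1 from rfl, ite_true, ite_false, sub_zero, zero_sub, sub_neg_eq_add,
    zero_add] at e
  rw [s1] at e
  try norm_num at e
  first | linear_combination e | linear_combination -e | linear_combination 2*e | linear_combination -2*e | linear_combination e/2 | linear_combination -e/2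

end Eqs

/-- `L₁` is Frobenius: the functional dual (via the trace form) to
`A_{2,1} + A_{M-1,1}` makes `(x, y) ↦ A*⁅x, y⁆` nondegenerate on `L₁`. -/
theorem L1_isFrobenius (M : ℕ) (hM : 5 ≤ M) :
    ∀ X ∈ L1 M,
      (∀ Y ∈ L1 M, Matrix.trace ((Amat M 2 1 + Amat M (M - 1) 1) * ⁅X, Y⁆) = 0) → X = 0 := by
  intro X hX h
  obtain ⟨hZ, hS⟩ := L1_le_W M hM hX
  have memH1 : Hmat M 1 ∈ L1 M :=
    LieSubalgebra.subset_lieSpan (by left; left; exact Set.mem_insert _ _)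
  have memH2 : Hmat M 2 ∈ L1 M :=
    LieSubalgebra.subset_lieSpan (by left; left; exact Set.mem_insert_of_mem _ rfl)
  have memA1 : ∀ j : ℕ, 1 < j → j ≤ M → Amat M 1 j ∈ L1 M := fun j h1 h2 =>
    LieSubalgebra.subset_lieSpan (by left; right; exact ⟨j, h1, h2, rfl⟩)
  have memA2 : ∀ j : ℕ, 2 < j → j ≤ M → Amat M 2 j ∈ L1 M := fun j h1 h2 =>
    LieSubalgebra.subset_lieSpan (by right; exact ⟨j, h1, h2, rfl⟩)
  have E1 := eqH1 M hM X hZ hS (h _ memH1)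
  have E2 := eqH2 M hM X hZ hS (h _ memH2)
  have F01 : X ⟨0, by omega⟩ ⟨1, by omega⟩ = 0 := by linear_combination (E1 + E2) / 2
  have F0M2 : X ⟨0, by omega⟩ ⟨M-2, by omega⟩ = 0 := by linear_combination (E1 - E2) / 2
  have E3 := eqA12 M hM X hZ hS (h _ (memA1 2 (by omega) (by omega)))
  have E4 := eqA1M1 M hM X hZ hS (h _ (memA1 (M-1) (by omega) (by omega)))
  have F00 : X ⟨0, by omega⟩ ⟨0, by omega⟩ = 0 := by linear_combination (E3 + E4) / 2
  have F11 : X ⟨1, by omega⟩ ⟨1, by omega⟩ = 0 := by linear_combination (E4 - E3) / 2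
  have F1 : ∀ b : Fin M, b.1 + 3 ≤ M → X ⟨1, by omega⟩ b = 0 := by
    intro b hb
    rcases Nat.lt_or_ge b.1 2 with hb2 | hb2
    · rcases Nat.lt_or_ge b.1 1 with hb1 | hb1
      · exact hZ _ _ (Or.inl (by simp only [Fin.val_mk]; omega))
      · have hbe : b = ⟨1, by omega⟩ := Fin.ext (by simp only [Fin.val_mk]; omega)
        simp only [hbe]; exact F11
    · have E := eqA1j M hM X hZ hS (M - b.1) (by omega) (by omega)
        (h _ (memA1 (M - b.1) (by omega) (by omega)))
      have hbe : (⟨M - (M - b.1), by omega⟩ : Fin M) = b :=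
        Fin.ext (by simp only [Fin.val_mk]; omega)
      rw [hbe] at E; exact E
  have F0 : ∀ b : Fin M, b.1 + 2 ≤ M → X ⟨0, by omega⟩ b = 0 := by
    intro b hb
    rcases Nat.lt_or_ge b.1 2 with hb2 | hb2
    · rcases Nat.lt_or_ge b.1 1 with hb1 | hb1
      · have hbe : b = ⟨0, by omega⟩ := Fin.ext (by simp only [Fin.val_mk]; omega)
        simp only [hbe]; exact F00
      · have hbe : b = ⟨1, by omega⟩ := Fin.ext (by simp only [Fin.val_mk]; omega)
        simp only [hbe]; exact F01
    · rcases Nat.lt_or_ge b.1 (M-2) with hb3 | hb3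
      · have E := eqA2j M hM X hZ hS (M - b.1) (by omega) (by omega)
          (h _ (memA2 (M - b.1) (by omega) (by omega)))
        have hbe : (⟨M - (M - b.1), by omega⟩ : Fin M) = b :=
          Fin.ext (by simp only [Fin.val_mk]; omega)
        rw [hbe] at E; exact E
      · have hbe : b = ⟨M-2, by omega⟩ := Fin.ext (by simp only [Fin.val_mk]; omega)
        simp only [hbe]; exact F0M2
  ext a b
  rw [Matrix.zero_apply]
  have haM := a.2
  have hbM := b.2
  rcases Nat.lt_or_ge b.1 a.1 with hab | hab
  · exact hZ a b (Or.inl hab)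
  rcases Nat.lt_or_ge b.1 (M-2) with hbb | hbb
  · rcases Nat.lt_or_ge a.1 2 with ha2 | ha2
    · rcases Nat.lt_or_ge a.1 1 with ha1 | ha1
      · have hae : a = ⟨0, by omega⟩ := Fin.ext (by simp only [Fin.val_mk]; omega)
        simp only [hae]; exact F0 b (by omega)
      · have hae : a = ⟨1, by omega⟩ := Fin.ext (by simp only [Fin.val_mk]; omega)
        simp only [hae]; exact F1 b (by omega)
    · exact hZ a b (Or.inr ⟨ha2, by omega⟩)
  rcases Nat.lt_or_ge b.1 (M-1) with hbb1 | hbb1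
  · have hbe : b = ⟨M-2, by omega⟩ := Fin.ext (by simp only [Fin.val_mk]; omega)
    rcases Nat.lt_or_ge a.1 2 with ha2 | ha2
    · rcases Nat.lt_or_ge a.1 1 with ha1 | ha1
      · have hae : a = ⟨0, by omega⟩ := Fin.ext (by simp only [Fin.val_mk]; omega)
        simp only [hae, hbe]; exact F0M2
      · have hae : a = ⟨1, by omega⟩ := Fin.ext (by simp only [Fin.val_mk]; omega)
        simp only [hae, hbe]
        have h' := goodS_val M X hS ⟨1, by omega⟩ ⟨M-2, by omega⟩ ⟨1, by omega⟩ ⟨M-2, by omega⟩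
          (by simp only [Fin.val_mk]; omega) (by simp only [Fin.val_mk]; omega)
        linear_combination h' / 2
    · simp only [hbe]
      have h' := goodS_val M X hS ⟨1, by omega⟩ ⟨M-1-a.1, by omega⟩ a ⟨M-2, by omega⟩
        (by simp only [Fin.val_mk]; omega) (by simp only [Fin.val_mk]; omega)
      rw [h', F1 ⟨M-1-a.1, by omega⟩ (by simp only [Fin.val_mk]; omega), neg_zero]
  · have hbe : b = ⟨M-1, by omega⟩ := Fin.ext (by simp only [Fin.val_mk]; omega)
    simp only [hbe]
    rcases Nat.lt_or_ge a.1 1 with ha1 | ha1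
    · have hae : a = ⟨0, by omega⟩ := Fin.ext (by simp only [Fin.val_mk]; omega)
      simp only [hae]
      have h' := goodS_val M X hS ⟨0, by omega⟩ ⟨M-1, by omega⟩ ⟨0, by omega⟩ ⟨M-1, by omega⟩
        (by simp only [Fin.val_mk]; omega) (by simp only [Fin.val_mk]; omega)
      linear_combination h' / 2
    · have h' := goodS_val M X hS ⟨0, by omega⟩ ⟨M-1-a.1, by omega⟩ a ⟨M-1, by omega⟩
        (by simp only [Fin.val_mk]; omega) (by simp only [Fin.val_mk]; omega)
      rw [h', F0 ⟨M-1-a.1, by omega⟩ (by simp only [Fin.val_mk]; omega), neg_zero]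
end

section
/- Let L_{K,M} be the subalgebra of B(so(M)) generated by {H_i, A_{i,j} : i = 1,…,2K; i < j ≤ M} with 2K ≤ [M/2]. Then L_{K,M} is a Frobenius Lie algebra, with Frobenius homomorphism A*_{K,M} dual to (A_{2,1}+A_{4,3}+…) + (A_{M-1,1}+A_{M-3,3}+…). -/
open Matrix

attribute [local instance 100] LieRing.ofAssociativeRing

/-- The Lie subalgebra `L_{K,M} ⊂ B(so(M))` generated by
`{H_i, A_{i,j} : 1 ≤ i ≤ 2K, i < j ≤ M}`. -/
noncomputable def LKM (K M : ℕ) : LieSubalgebra ℂ (Matrix (Fin M) (Fin M) ℂ) :=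
  LieSubalgebra.lieSpan ℂ _
    ({X | ∃ i, 1 ≤ i ∧ i ≤ 2 * K ∧ X = Hmat M i}
      ∪ {X | ∃ i j, 1 ≤ i ∧ i ≤ 2 * K ∧ i < j ∧ j ≤ M ∧ X = Amat M i j})

/-- The element `(A_{2,1} + A_{4,3} + ⋯) + (A_{M-1,1} + A_{M-3,3} + ⋯)` whose trace-dual is the
Frobenius homomorphism `A*_{K,M}`. -/
noncomputable def Zmat (K M : ℕ) : Matrix (Fin M) (Fin M) ℂ :=
  ∑ t ∈ Finset.range K, (Amat M (2 * t + 2) (2 * t + 1) + Amat M (M - 1 - 2 * t) (2 * t + 1))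

/-- 1-based totalized entry function. -/
noncomputable def ee (M : ℕ) (X : Matrix (Fin M) (Fin M) ℂ) (i j : ℕ) : ℂ :=
  if h : 1 ≤ i ∧ i ≤ M ∧ 1 ≤ j ∧ j ≤ M then X ⟨i - 1, by omega⟩ ⟨j - 1, by omega⟩ else 0

lemma ee_apply {M : ℕ} (X : Matrix (Fin M) (Fin M) ℂ) (k l : Fin M) :
    ee M X (k.1 + 1) (l.1 + 1) = X k l := by
  have hk := k.2; have hl := l.2
  rw [ee, dif_pos (by omega)]
  simp

lemma ee_out {M : ℕ} (X : Matrix (Fin M) (Fin M) ℂ) {i j : ℕ}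
    (h : ¬(1 ≤ i ∧ i ≤ M ∧ 1 ≤ j ∧ j ≤ M)) : ee M X i j = 0 := dif_neg h

lemma ee_mk {M : ℕ} (X : Matrix (Fin M) (Fin M) ℂ) {i j : ℕ}
    (hi : 1 ≤ i) (hi2 : i ≤ M) (hj : 1 ≤ j) (hj2 : j ≤ M) :
    ee M X i j = X ⟨i - 1, by omega⟩ ⟨j - 1, by omega⟩ := dif_pos (by omega)

lemma Eu_mul {M : ℕ} (X : Matrix (Fin M) (Fin M) ℂ) (i j : ℕ) (p q : Fin M) :
    (Eu M i j * X) p q = if p.1 + 1 = i then ee M X j (q.1 + 1) else 0 := by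
  rw [Matrix.mul_apply]
  by_cases hp : p.1 + 1 = i
  · rw [if_pos hp]
    by_cases hj : 1 ≤ j ∧ j ≤ M
    · rw [ee_mk X hj.1 hj.2 (by omega) (by have := q.2; omega),
        Finset.sum_eq_single_of_mem (⟨j - 1, by omega⟩ : Fin M) (Finset.mem_univ _)]
      · rw [Eu, Matrix.of_apply, if_pos ⟨hp, by simp; omega⟩, one_mul]
        simp
      · intro b _ hb
        rw [Eu, Matrix.of_apply, if_neg, zero_mul]
        rintro ⟨-, h2⟩
        exact hb (Fin.ext (by simp; omega))
    · rw [ee_out X (by have := q.2; omega), Finset.sum_eq_zero]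
      intro b _
      rw [Eu, Matrix.of_apply, if_neg, zero_mul]
      rintro ⟨-, h2⟩; have := b.2; omega
  · rw [if_neg hp, Finset.sum_eq_zero]
    intro b _
    rw [Eu, Matrix.of_apply, if_neg, zero_mul]
    rintro ⟨h1, -⟩; exact hp h1

lemma mul_Eu {M : ℕ} (X : Matrix (Fin M) (Fin M) ℂ) (i j : ℕ) (p q : Fin M) :
    (X * Eu M i j) p q = if q.1 + 1 = j then ee M X (p.1 + 1) i else 0 := by
  rw [Matrix.mul_apply]
  by_cases hq : q.1 + 1 = j
  · rw [if_pos hq]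
    by_cases hi : 1 ≤ i ∧ i ≤ M
    · rw [ee_mk X (by have := p.2; omega) (by have := p.2; omega) hi.1 hi.2,
        Finset.sum_eq_single_of_mem (⟨i - 1, by omega⟩ : Fin M) (Finset.mem_univ _)]
      · rw [Eu, Matrix.of_apply, if_pos ⟨by simp; omega, hq⟩, mul_one]
        simp
      · intro b _ hb
        rw [Eu, Matrix.of_apply, if_neg, mul_zero]
        rintro ⟨h1, -⟩
        exact hb (Fin.ext (by simp; omega))
    · rw [ee_out X (by have := p.2; omega), Finset.sum_eq_zero]
      intro b _
      rw [Eu, Matrix.of_apply, if_neg, mul_zero]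
      rintro ⟨h1, -⟩; have := b.2; omega
  · rw [if_neg hq, Finset.sum_eq_zero]
    intro b _
    rw [Eu, Matrix.of_apply, if_neg, mul_zero]
    rintro ⟨-, h2⟩; exact hq h2

lemma trace_mul_Eu {M : ℕ} (X : Matrix (Fin M) (Fin M) ℂ) (i j : ℕ) :
    Matrix.trace (X * Eu M i j) = ee M X j i := by
  rw [Matrix.trace]
  by_cases hj : 1 ≤ j ∧ j ≤ M
  · rw [Finset.sum_eq_single_of_mem (⟨j - 1, by omega⟩ : Fin M) (Finset.mem_univ _)]
    · rw [Matrix.diag_apply, mul_Eu, if_pos (by simp; omega)]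
      congr 1
      simp; omega
    · intro b _ hb
      rw [Matrix.diag_apply, mul_Eu, if_neg]
      intro h; exact hb (Fin.ext (by simp; omega))
  · rw [ee_out X (by omega), Finset.sum_eq_zero]
    intro b _
    rw [Matrix.diag_apply, mul_Eu, if_neg]
    intro h; have := b.2; omega

-- mirror infrastructure
lemma mul_rev {M : ℕ} {X Y : Matrix (Fin M) (Fin M) ℂ}
    (hX : ∀ k l, X k l = -X l.rev k.rev) (hY : ∀ k l, Y k l = -Y l.rev k.rev)
    (k l : Fin M) : (X * Y) k l = (Y * X) l.rev k.rev := by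
  rw [Matrix.mul_apply, Matrix.mul_apply,
    ← Equiv.sum_comp (Fin.revPerm) (fun m => Y l.rev m * X m k.rev)]
  refine Finset.sum_congr rfl fun m _ => ?_
  rw [hX k m, hY m l]
  simp only [Fin.revPerm_apply]
  ring

lemma lie_rev {M : ℕ} {X Y : Matrix (Fin M) (Fin M) ℂ}
    (hX : ∀ k l, X k l = -X l.rev k.rev) (hY : ∀ k l, Y k l = -Y l.rev k.rev)
    (k l : Fin M) : ⁅X, Y⁆ k l = -⁅X, Y⁆ l.rev k.rev := by
  have e1 := mul_rev hX hY k l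
  have e2 := mul_rev hY hX k l
  rw [Ring.lie_def, Matrix.sub_apply, Matrix.sub_apply, e1, e2]
  ring

lemma Amat_rev {M i j : ℕ} (hi1 : 1 ≤ i) (hi2 : i ≤ M) (hj1 : 1 ≤ j) (hj2 : j ≤ M)
    (k l : Fin M) : Amat M i j k l = -Amat M i j l.rev k.rev := by
  have hk := k.2; have hl := l.2
  simp only [Amat, Eu, Matrix.sub_apply, Matrix.of_apply, Fin.val_rev]
  split_ifs <;> first | (exfalso; omega) | norm_num

lemma Hmat_rev {M i : ℕ} (hi1 : 1 ≤ i) (hi2 : i ≤ M)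
    (k l : Fin M) : Hmat M i k l = -Hmat M i l.rev k.rev := by
  have hk := k.2; have hl := l.2
  simp only [Hmat, Eu, Matrix.smul_apply, Matrix.sub_apply, Matrix.of_apply, Fin.val_rev,
    smul_eq_mul]
  split_ifs <;> first | (exfalso; omega) | norm_num

-- The enveloping subalgebra V
def Vprop (K M : ℕ) (X : Matrix (Fin M) (Fin M) ℂ) : Prop :=
  (∀ k l : Fin M, (l : ℕ) < k → X k l = 0) ∧
  (∀ k l : Fin M, X k l = -X l.rev k.rev) ∧
  (∀ k l : Fin M, 2 * K ≤ (k : ℕ) → (l : ℕ) + 2 * K + 1 ≤ M → X k l = 0)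

noncomputable def Vsub (K M : ℕ) (hM : 4 * K ≤ M) :
    LieSubalgebra ℂ (Matrix (Fin M) (Fin M) ℂ) where
  carrier := {X | Vprop K M X}
  add_mem' := by
    rintro X Y ⟨h1, h2, h3⟩ ⟨g1, g2, g3⟩
    refine ⟨fun k l h => ?_, fun k l => ?_, fun k l h h' => ?_⟩
    · simp [Matrix.add_apply, h1 k l h, g1 k l h]
    · simp only [Matrix.add_apply]; rw [h2 k l, g2 k l]; ring
    · simp [Matrix.add_apply, h3 k l h h', g3 k l h h']
  zero_mem' := ⟨fun _ _ _ => rfl, fun _ _ => by simp, fun _ _ _ _ => rfl⟩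
  smul_mem' := by
    rintro c X ⟨h1, h2, h3⟩
    refine ⟨fun k l h => ?_, fun k l => ?_, fun k l h h' => ?_⟩
    · simp [Matrix.smul_apply, h1 k l h]
    · simp only [Matrix.smul_apply]; rw [h2 k l]; simp
    · simp [Matrix.smul_apply, h3 k l h h']
  lie_mem' := by
    rintro X Y ⟨h1, h2, h3⟩ ⟨g1, g2, g3⟩
    refine ⟨fun k l h => ?_, fun k l => lie_rev h2 g2 k l, fun k l h h' => ?_⟩
    · rw [Ring.lie_def, Matrix.sub_apply, Matrix.mul_apply, Matrix.mul_apply]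
      rw [Finset.sum_eq_zero, Finset.sum_eq_zero, sub_zero]
      all_goals
        intro m _
        rcases lt_or_ge (m : ℕ) (k : ℕ) with hm | hm
        · first
          | rw [h1 k m hm, zero_mul] | rw [g1 k m hm, zero_mul]
        · first
          | rw [h1 m l (by omega), mul_zero] | rw [g1 m l (by omega), mul_zero]
    · rw [Ring.lie_def, Matrix.sub_apply, Matrix.mul_apply, Matrix.mul_apply]
      rw [Finset.sum_eq_zero, Finset.sum_eq_zero, sub_zero]
      all_goals
        intro m _
        rcases lt_or_ge (m : ℕ) (2 * K) with hm | hm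
        · first
          | rw [h3 k m h (by omega), zero_mul] | rw [g3 k m h (by omega), zero_mul]
        · first
          | rw [h3 m l hm h', mul_zero] | rw [g3 m l hm h', mul_zero]

lemma Hmat_mem_V {K M i : ℕ} (hM : 4 * K ≤ M) (h1 : 1 ≤ i) (h2 : i ≤ 2 * K) :
    Hmat M i ∈ Vsub K M hM := by
  refine ⟨fun k l h => ?_, fun k l => Hmat_rev h1 (by omega) k l, fun k l h h' => ?_⟩
  · have hk := k.2; have hl := l.2
    simp only [Hmat, Eu, Matrix.smul_apply, Matrix.sub_apply, Matrix.of_apply, smul_eq_mul]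
    rw [if_neg (by omega), if_neg (by omega)]
    norm_num
  · have hk := k.2; have hl := l.2
    simp only [Hmat, Eu, Matrix.smul_apply, Matrix.sub_apply, Matrix.of_apply, smul_eq_mul]
    rw [if_neg (by omega), if_neg (by omega)]
    norm_num

lemma Amat_mem_V {K M i j : ℕ} (hM : 4 * K ≤ M) (h1 : 1 ≤ i) (h2 : i ≤ 2 * K)
    (h3 : i < j) (h4 : j ≤ M) : Amat M i j ∈ Vsub K M hM := by
  refine ⟨fun k l h => ?_, fun k l => Amat_rev h1 (by omega) (by omega) h4 k l,
    fun k l h h' => ?_⟩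
  · have hk := k.2; have hl := l.2
    simp only [Amat, Eu, Matrix.sub_apply, Matrix.of_apply]
    rw [if_neg (by omega), if_neg (by omega)]
    norm_num
  · have hk := k.2; have hl := l.2
    simp only [Amat, Eu, Matrix.sub_apply, Matrix.of_apply]
    rw [if_neg (by omega), if_neg (by omega)]
    norm_num

lemma LKM_le_V {K M : ℕ} (hM : 4 * K ≤ M) : LKM K M ≤ Vsub K M hM := by
  rw [LKM]
  rw [LieSubalgebra.lieSpan_le]
  rintro X (⟨i, h1, h2, rfl⟩ | ⟨i, j, h1, h2, h3, h4, rfl⟩)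
  · exact Hmat_mem_V hM h1 h2
  · exact Amat_mem_V hM h1 h2 h3 h4

lemma ee_rev {M : ℕ} {C : Matrix (Fin M) (Fin M) ℂ}
    (h : ∀ k l, C k l = -C l.rev k.rev) (i j : ℕ) :
    ee M C i j = -ee M C (M + 1 - j) (M + 1 - i) := by
  by_cases hr : 1 ≤ i ∧ i ≤ M ∧ 1 ≤ j ∧ j ≤ M
  · obtain ⟨hi1, hi2, hj1, hj2⟩ := hr
    rw [ee_mk C hi1 hi2 hj1 hj2, ee_mk C (by omega) (by omega) (by omega) (by omega),
      h ⟨i - 1, by omega⟩ ⟨j - 1, by omega⟩]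
    congr 2 <;> exact Fin.ext (by simp [Fin.val_rev]; omega)
  · rw [ee_out C hr, ee_out C (by omega), neg_zero]

lemma Zmat_rev {K M : ℕ} (hM : 4 * K ≤ M) (k l : Fin M) :
    Zmat K M k l = -Zmat K M l.rev k.rev := by
  rw [Zmat, Matrix.sum_apply, Matrix.sum_apply, ← Finset.sum_neg_distrib]
  refine Finset.sum_congr rfl fun t ht => ?_
  simp only [Finset.mem_range] at ht
  rw [Matrix.add_apply, Matrix.add_apply,
    Amat_rev (by omega) (by omega) (by omega) (by omega) k l,
    Amat_rev (i := M - 1 - 2 * t) (by omega) (by omega) (by omega) (by omega) k l]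
  ring

lemma key_hC {K M : ℕ} (hM : 4 * K ≤ M) {X : Matrix (Fin M) (Fin M) ℂ}
    (hXrev : ∀ k l, X k l = -X l.rev k.rev)
    (h : ∀ Y ∈ LKM K M, Matrix.trace (Zmat K M * ⁅X, Y⁆) = 0) :
    ∀ p q : ℕ, 1 ≤ q → q ≤ 2 * K → q ≤ p → p ≤ M →
      ee M (Zmat K M * X - X * Zmat K M) p q = 0 := by
  set C := Zmat K M * X - X * Zmat K M with hCdef
  have hCrev : ∀ k l, C k l = -C l.rev k.rev := by
    intro k l
    have := lie_rev (Zmat_rev hM) hXrev k l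
    rwa [Ring.lie_def] at this
  have htr : ∀ Y, Matrix.trace (Zmat K M * ⁅X, Y⁆) = Matrix.trace (C * Y) := by
    intro Y
    rw [Ring.lie_def, mul_sub, Matrix.trace_sub, hCdef, sub_mul, Matrix.trace_sub]
    congr 1
    · rw [← mul_assoc]
    · rw [← mul_assoc, Matrix.trace_mul_comm, ← mul_assoc]
  intro p q hq1 hq2 hqp hpM
  rcases eq_or_lt_of_le hqp with rfl | hlt
  · -- diagonal: use Hmat
    have hmem : Hmat M q ∈ LKM K M :=
      LieSubalgebra.subset_lieSpan (Set.mem_union_left _ ⟨q, hq1, hq2, rfl⟩)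
    have h0 := h _ hmem
    rw [htr, Hmat, mul_smul_comm, Matrix.trace_smul, mul_sub, Matrix.trace_sub,
      trace_mul_Eu, trace_mul_Eu] at h0
    have e1 : ee M C (M + 1 - q) (M + 1 - q) = -ee M C q q := by
      rw [ee_rev hCrev (M + 1 - q) (M + 1 - q),
        show M + 1 - (M + 1 - q) = q from by omega]
    rw [e1, smul_eq_mul] at h0
    linear_combination h0
  · -- off-diagonal: use Amat q p
    have hmem : Amat M q p ∈ LKM K M :=
      LieSubalgebra.subset_lieSpan (Set.mem_union_right _ ⟨q, p, hq1, hq2, hlt, hpM, rfl⟩)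
    have h0 := h _ hmem
    rw [htr, Amat, mul_sub, Matrix.trace_sub, trace_mul_Eu, trace_mul_Eu] at h0
    have e1 : ee M C (M + 1 - q) (M + 1 - p) = -ee M C p q := by
      rw [ee_rev hCrev (M + 1 - q) (M + 1 - p),
        show M + 1 - (M + 1 - p) = p from by omega,
        show M + 1 - (M + 1 - q) = q from by omega]
    rw [e1] at h0
    linear_combination (1 / 2 : ℂ) * h0

noncomputable def zr (M : ℕ) (X : Matrix (Fin M) (Fin M) ℂ) (p1 q1 t : ℕ) : ℂ :=
  ((if p1 = 2 * t + 2 then ee M X (2 * t + 1) q1 else 0)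
    - (if p1 = M - 2 * t then ee M X (M - 1 - 2 * t) q1 else 0))
  + ((if p1 = M - 1 - 2 * t then ee M X (2 * t + 1) q1 else 0)
    - (if p1 = M - 2 * t then ee M X (2 * t + 2) q1 else 0))

noncomputable def zc (M : ℕ) (X : Matrix (Fin M) (Fin M) ℂ) (p1 q1 t : ℕ) : ℂ :=
  ((if q1 = 2 * t + 1 then ee M X p1 (2 * t + 2) else 0)
    - (if q1 = M - 1 - 2 * t then ee M X p1 (M - 2 * t) else 0))
  + ((if q1 = 2 * t + 1 then ee M X p1 (M - 1 - 2 * t) else 0)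
    - (if q1 = 2 * t + 2 then ee M X p1 (M - 2 * t) else 0))

lemma C_formula {K M : ℕ} (hM : 4 * K ≤ M) (X : Matrix (Fin M) (Fin M) ℂ) (p q : Fin M) :
    (Zmat K M * X - X * Zmat K M) p q
      = (∑ t ∈ Finset.range K, zr M X (p.1 + 1) (q.1 + 1) t)
        - (∑ t ∈ Finset.range K, zc M X (p.1 + 1) (q.1 + 1) t) := by
  rw [Matrix.sub_apply]
  congr 1
  · rw [Zmat, Finset.sum_mul, Matrix.sum_apply]
    refine Finset.sum_congr rfl fun t ht => ?_
    simp only [Finset.mem_range] at ht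
    rw [add_mul, Matrix.add_apply, Amat, Amat, sub_mul, sub_mul, Matrix.sub_apply,
      Matrix.sub_apply, Eu_mul, Eu_mul, Eu_mul, Eu_mul, zr,
      show M + 1 - (2 * t + 1) = M - 2 * t from by omega,
      show M + 1 - (2 * t + 2) = M - 1 - 2 * t from by omega,
      show M + 1 - (M - 1 - 2 * t) = 2 * t + 2 from by omega]
  · rw [Zmat, Finset.mul_sum, Matrix.sum_apply]
    refine Finset.sum_congr rfl fun t ht => ?_
    simp only [Finset.mem_range] at ht
    rw [mul_add, Matrix.add_apply, Amat, Amat, mul_sub, mul_sub, Matrix.sub_apply,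
      Matrix.sub_apply, mul_Eu, mul_Eu, mul_Eu, mul_Eu, zc,
      show M + 1 - (2 * t + 1) = M - 2 * t from by omega,
      show M + 1 - (2 * t + 2) = M - 1 - 2 * t from by omega,
      show M + 1 - (M - 1 - 2 * t) = 2 * t + 2 from by omega]

lemma eeC_formula {K M : ℕ} (hM : 4 * K ≤ M) (X : Matrix (Fin M) (Fin M) ℂ) {p1 q1 : ℕ}
    (hp1 : 1 ≤ p1) (hp2 : p1 ≤ M) (hq1 : 1 ≤ q1) (hq2 : q1 ≤ M) :
    ee M (Zmat K M * X - X * Zmat K M) p1 q1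
      = (∑ t ∈ Finset.range K, zr M X p1 q1 t) - (∑ t ∈ Finset.range K, zc M X p1 q1 t) := by
  obtain ⟨p, hp⟩ : ∃ p : Fin M, p.1 + 1 = p1 := ⟨⟨p1 - 1, by omega⟩, by simp; omega⟩
  obtain ⟨q, hq⟩ : ∃ q : Fin M, q.1 + 1 = q1 := ⟨⟨q1 - 1, by omega⟩, by simp; omega⟩
  subst hp; subst hq
  rw [ee_apply, C_formula hM X p q]

lemma sum_zr_zero {K M : ℕ} {X : Matrix (Fin M) (Fin M) ℂ} {p1 q1 : ℕ}
    (h : ∀ t, t < K → p1 ≠ 2 * t + 2 ∧ p1 ≠ M - 2 * t ∧ p1 ≠ M - 1 - 2 * t) :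
    ∑ t ∈ Finset.range K, zr M X p1 q1 t = 0 := by
  refine Finset.sum_eq_zero fun t ht => ?_
  obtain ⟨a, b, c⟩ := h t (Finset.mem_range.mp ht)
  rw [zr, if_neg a, if_neg b, if_neg c, if_neg b]
  ring

lemma sum_zr_single {K M : ℕ} {X : Matrix (Fin M) (Fin M) ℂ} {p1 q1 : ℕ} (s : ℕ) (hs : s < K)
    (h : ∀ t, t < K → t ≠ s → p1 ≠ 2 * t + 2 ∧ p1 ≠ M - 2 * t ∧ p1 ≠ M - 1 - 2 * t) :
    ∑ t ∈ Finset.range K, zr M X p1 q1 t = zr M X p1 q1 s := by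
  refine Finset.sum_eq_single_of_mem s (Finset.mem_range.mpr hs) fun t ht hts => ?_
  obtain ⟨a, b, c⟩ := h t (Finset.mem_range.mp ht) hts
  rw [zr, if_neg a, if_neg b, if_neg c, if_neg b]
  ring

lemma sum_zc_single {K M : ℕ} {X : Matrix (Fin M) (Fin M) ℂ} {p1 q1 : ℕ} (s : ℕ) (hs : s < K)
    (h : ∀ t, t < K → t ≠ s → q1 ≠ 2 * t + 1 ∧ q1 ≠ M - 1 - 2 * t ∧ q1 ≠ 2 * t + 2) :
    ∑ t ∈ Finset.range K, zc M X p1 q1 t = zc M X p1 q1 s := by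
  refine Finset.sum_eq_single_of_mem s (Finset.mem_range.mpr hs) fun t ht hts => ?_
  obtain ⟨a, b, c⟩ := h t (Finset.mem_range.mp ht) hts
  rw [zc, if_neg a, if_neg b, if_neg a, if_neg c]
  ring

lemma main_kill {K M : ℕ} (hM : 4 * K ≤ M) {X : Matrix (Fin M) (Fin M) ℂ}
    (hV : Vprop K M X)
    (hC : ∀ p q : ℕ, 1 ≤ q → q ≤ 2 * K → q ≤ p → p ≤ M →
      ee M (Zmat K M * X - X * Zmat K M) p q = 0) :
    X = 0 := by
  obtain ⟨hu, hm, hs⟩ := hV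
  -- ee-level structure facts
  have up : ∀ i j : ℕ, j < i → ee M X i j = 0 := by
    intro i j hij
    by_cases hr : 1 ≤ i ∧ i ≤ M ∧ 1 ≤ j ∧ j ≤ M
    · rw [ee_mk X hr.1 hr.2.1 hr.2.2.1 hr.2.2.2]
      exact hu _ _ (by simp; omega)
    · exact ee_out X hr
  have mir : ∀ i j : ℕ, ee M X i j = -ee M X (M + 1 - j) (M + 1 - i) := ee_rev hm
  have sup : ∀ i j : ℕ, 2 * K < i → j + 2 * K ≤ M → ee M X i j = 0 := by
    intro i j hi hj
    by_cases hr : 1 ≤ i ∧ i ≤ M ∧ 1 ≤ j ∧ j ≤ M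
    · rw [ee_mk X hr.1 hr.2.1 hr.2.2.1 hr.2.2.2]
      exact hs _ _ (by simp; omega) (by simp; omega)
    · exact ee_out X hr
  have adiag : ∀ i j : ℕ, i + j = M + 1 → ee M X i j = 0 := by
    intro i j hij
    by_cases hr : 1 ≤ i ∧ i ≤ M ∧ 1 ≤ j ∧ j ≤ M
    · have h0 := mir i j
      rw [show M + 1 - j = i from by omega, show M + 1 - i = j from by omega] at h0
      linear_combination (1 / 2 : ℂ) * h0
    · exact ee_out X hr
  -- Q1 : diagonal odd position
  have Q1 : ∀ s, s < K →
      ee M X (2 * s + 1) (2 * s + 2) + ee M X (2 * s + 1) (M - 1 - 2 * s) = 0 := by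
    intro s hs'
    have h0 := hC (2 * s + 1) (2 * s + 1) (by omega) (by omega) (by omega) (by omega)
    rw [eeC_formula hM X (by omega) (by omega) (by omega) (by omega),
      sum_zr_zero (fun t ht => ⟨by omega, by omega, by omega⟩),
      sum_zc_single s hs' (fun t ht hts => ⟨by omega, by omega, by omega⟩)] at h0
    simp only [zc] at h0
    split_ifs at h0 <;> first | (exfalso; omega) | linear_combination -h0
  -- Q2 : diagonal even position
  have Q2 : ∀ s, s < K →
      ee M X (2 * s + 1) (2 * s + 2) + ee M X (2 * s + 2) (M - 2 * s) = 0 := by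
    intro s hs'
    have h0 := hC (2 * s + 2) (2 * s + 2) (by omega) (by omega) (by omega) (by omega)
    rw [eeC_formula hM X (by omega) (by omega) (by omega) (by omega),
      sum_zr_single s hs' (fun t ht hts => ⟨by omega, by omega, by omega⟩),
      sum_zc_single s hs' (fun t ht hts => ⟨by omega, by omega, by omega⟩)] at h0
    simp only [zr, zc] at h0
    split_ifs at h0 <;> first | (exfalso; omega) | linear_combination h0
  -- Q3 : C at (even, odd) same block
  have Q3 : ∀ s, s < K →
      ee M X (2 * s + 1) (2 * s + 1) = ee M X (2 * s + 2) (2 * s + 2) := by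
    intro s hs'
    have e1 : ee M X (2 * s + 2) (M - 1 - 2 * s) = 0 := adiag _ _ (by omega)
    have h0 := hC (2 * s + 2) (2 * s + 1) (by omega) (by omega) (by omega) (by omega)
    rw [eeC_formula hM X (by omega) (by omega) (by omega) (by omega),
      sum_zr_single s hs' (fun t ht hts => ⟨by omega, by omega, by omega⟩),
      sum_zc_single s hs' (fun t ht hts => ⟨by omega, by omega, by omega⟩)] at h0
    simp only [zr, zc] at h0
    split_ifs at h0 <;>
      first | (exfalso; omega) | (rw [e1] at h0; linear_combination h0)
  -- Q4 : C at (M-1-2s, 2s+1)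
  have Q4 : ∀ s, s < K →
      ee M X (2 * s + 1) (2 * s + 1) + ee M X (2 * s + 2) (2 * s + 2) = 0 := by
    intro s hs'
    have e1 : ee M X (M - 1 - 2 * s) (2 * s + 2) = 0 := sup _ _ (by omega) (by omega)
    have e2 := mir (M - 1 - 2 * s) (M - 1 - 2 * s)
    rw [show M + 1 - (M - 1 - 2 * s) = 2 * s + 2 from by omega] at e2
    have h0 := hC (M - 1 - 2 * s) (2 * s + 1) (by omega) (by omega) (by omega) (by omega)
    rw [eeC_formula hM X (by omega) (by omega) (by omega) (by omega),
      sum_zr_single s hs' (fun t ht hts => ⟨by omega, by omega, by omega⟩),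
      sum_zc_single s hs' (fun t ht hts => ⟨by omega, by omega, by omega⟩)] at h0
    simp only [zr, zc] at h0
    split_ifs at h0 <;>
      first | (exfalso; omega) | (rw [e1, e2] at h0; linear_combination h0)
  -- Q5 : C at (M-1-2u, 2s+1)
  have Q5 : ∀ s u, s < K → u < K →
      ee M X (2 * u + 1) (2 * s + 1) + ee M X (2 * s + 2) (2 * u + 2) = 0 := by
    intro s u hs' hu'
    rcases eq_or_ne u s with rfl | hus
    · have := Q4 u hu'
      have h3 := Q3 u hu'
      linear_combination this + h3 - h3
    · have e1 : ee M X (M - 1 - 2 * u) (2 * s + 2) = 0 := sup _ _ (by omega) (by omega)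
      have e2 := mir (M - 1 - 2 * u) (M - 1 - 2 * s)
      rw [show M + 1 - (M - 1 - 2 * s) = 2 * s + 2 from by omega,
        show M + 1 - (M - 1 - 2 * u) = 2 * u + 2 from by omega] at e2
      have h0 := hC (M - 1 - 2 * u) (2 * s + 1) (by omega) (by omega) (by omega) (by omega)
      rw [eeC_formula hM X (by omega) (by omega) (by omega) (by omega),
        sum_zr_single u hu' (fun t ht hts => ⟨by omega, by omega, by omega⟩),
        sum_zc_single s hs' (fun t ht hts => ⟨by omega, by omega, by omega⟩)] at h0
      simp only [zr, zc] at h0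
      split_ifs at h0 <;>
        first | (exfalso; omega) | (rw [e1, e2] at h0; linear_combination h0)
  -- Q6 : C at (M-2u, 2s+1)
  have Q6 : ∀ s u, s < K → u < K →
      ee M X (2 * s + 2) (2 * u + 1) = ee M X (2 * u + 2) (2 * s + 1) := by
    intro s u hs' hu'
    have e1 : ee M X (M - 1 - 2 * u) (2 * s + 1) = 0 := sup _ _ (by omega) (by omega)
    have e3 : ee M X (M - 2 * u) (2 * s + 2) = 0 := sup _ _ (by omega) (by omega)
    have e2 := mir (M - 2 * u) (M - 1 - 2 * s)
    rw [show M + 1 - (M - 1 - 2 * s) = 2 * s + 2 from by omega,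
      show M + 1 - (M - 2 * u) = 2 * u + 1 from by omega] at e2
    have h0 := hC (M - 2 * u) (2 * s + 1) (by omega) (by omega) (by omega) (by omega)
    rw [eeC_formula hM X (by omega) (by omega) (by omega) (by omega),
      sum_zr_single u hu' (fun t ht hts => ⟨by omega, by omega, by omega⟩),
      sum_zc_single s hs' (fun t ht hts => ⟨by omega, by omega, by omega⟩)] at h0
    simp only [zr, zc] at h0
    split_ifs at h0 <;>
      first | (exfalso; omega) | (rw [e1, e3, e2] at h0; linear_combination h0)
  -- Q7 : C at (M-1-2u, 2s+2)
  have Q7 : ∀ s u, s < K → u < K →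
      ee M X (2 * u + 1) (2 * s + 2) = ee M X (2 * s + 1) (2 * u + 2) := by
    intro s u hs' hu'
    have e2 := mir (M - 1 - 2 * u) (M - 2 * s)
    rw [show M + 1 - (M - 2 * s) = 2 * s + 1 from by omega,
      show M + 1 - (M - 1 - 2 * u) = 2 * u + 2 from by omega] at e2
    have h0 := hC (M - 1 - 2 * u) (2 * s + 2) (by omega) (by omega) (by omega) (by omega)
    rw [eeC_formula hM X (by omega) (by omega) (by omega) (by omega),
      sum_zr_single u hu' (fun t ht hts => ⟨by omega, by omega, by omega⟩),
      sum_zc_single s hs' (fun t ht hts => ⟨by omega, by omega, by omega⟩)] at h0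
    simp only [zr, zc] at h0
    split_ifs at h0 <;>
      first | (exfalso; omega) | (rw [e2] at h0; linear_combination h0)
  -- Q9 : middle rows
  have Q9a : ∀ r s, 2 * K < r → r ≤ M - 2 * K → s < K → ee M X r (M - 1 - 2 * s) = 0 := by
    intro r s hr1 hr2 hs'
    have e1 : ee M X r (2 * s + 2) = 0 := sup _ _ (by omega) (by omega)
    have h0 := hC r (2 * s + 1) (by omega) (by omega) (by omega) (by omega)
    rw [eeC_formula hM X (by omega) (by omega) (by omega) (by omega),
      sum_zr_zero (fun t ht => ⟨by omega, by omega, by omega⟩),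
      sum_zc_single s hs' (fun t ht hts => ⟨by omega, by omega, by omega⟩)] at h0
    simp only [zc] at h0
    split_ifs at h0 <;>
      first | (exfalso; omega) | (rw [e1] at h0; linear_combination -h0)
  have Q9b : ∀ r s, 2 * K < r → r ≤ M - 2 * K → s < K → ee M X r (M - 2 * s) = 0 := by
    intro r s hr1 hr2 hs'
    have h0 := hC r (2 * s + 2) (by omega) (by omega) (by omega) (by omega)
    rw [eeC_formula hM X (by omega) (by omega) (by omega) (by omega),
      sum_zr_zero (fun t ht => ⟨by omega, by omega, by omega⟩),
      sum_zc_single s hs' (fun t ht hts => ⟨by omega, by omega, by omega⟩)] at h0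
    simp only [zc] at h0
    split_ifs at h0 <;> first | (exfalso; omega) | linear_combination h0
  -- Q10 : small odd rows
  have Q10a : ∀ v s, s ≤ v → v < K →
      ee M X (2 * v + 1) (2 * s + 2) + ee M X (2 * v + 1) (M - 1 - 2 * s) = 0 := by
    intro v s hsv hv'
    have h0 := hC (2 * v + 1) (2 * s + 1) (by omega) (by omega) (by omega) (by omega)
    rw [eeC_formula hM X (by omega) (by omega) (by omega) (by omega),
      sum_zr_zero (fun t ht => ⟨by omega, by omega, by omega⟩),
      sum_zc_single s (by omega) (fun t ht hts => ⟨by omega, by omega, by omega⟩)] at h0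
    simp only [zc] at h0
    split_ifs at h0 <;> first | (exfalso; omega) | linear_combination -h0
  have Q10b : ∀ v s, s < v → v < K → ee M X (2 * v + 1) (M - 2 * s) = 0 := by
    intro v s hsv hv'
    have h0 := hC (2 * v + 1) (2 * s + 2) (by omega) (by omega) (by omega) (by omega)
    rw [eeC_formula hM X (by omega) (by omega) (by omega) (by omega),
      sum_zr_zero (fun t ht => ⟨by omega, by omega, by omega⟩),
      sum_zc_single s (by omega) (fun t ht hts => ⟨by omega, by omega, by omega⟩)] at h0
    simp only [zc] at h0
    split_ifs at h0 <;> first | (exfalso; omega) | linear_combination h0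
  -- Q11 : small even rows
  have Q11a : ∀ v s, s ≤ v → v < K →
      ee M X (2 * v + 1) (2 * s + 1) - ee M X (2 * v + 2) (2 * s + 2)
        - ee M X (2 * v + 2) (M - 1 - 2 * s) = 0 := by
    intro v s hsv hv'
    have h0 := hC (2 * v + 2) (2 * s + 1) (by omega) (by omega) (by omega) (by omega)
    rw [eeC_formula hM X (by omega) (by omega) (by omega) (by omega),
      sum_zr_single v (by omega) (fun t ht hts => ⟨by omega, by omega, by omega⟩),
      sum_zc_single s (by omega) (fun t ht hts => ⟨by omega, by omega, by omega⟩)] at h0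
    simp only [zr, zc] at h0
    split_ifs at h0 <;> first | (exfalso; omega) | linear_combination h0
  have Q11b : ∀ v s, s ≤ v → v < K →
      ee M X (2 * v + 1) (2 * s + 2) + ee M X (2 * v + 2) (M - 2 * s) = 0 := by
    intro v s hsv hv'
    have h0 := hC (2 * v + 2) (2 * s + 2) (by omega) (by omega) (by omega) (by omega)
    rw [eeC_formula hM X (by omega) (by omega) (by omega) (by omega),
      sum_zr_single v (by omega) (fun t ht hts => ⟨by omega, by omega, by omega⟩),
      sum_zc_single s (by omega) (fun t ht hts => ⟨by omega, by omega, by omega⟩)] at h0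
    simp only [zr, zc] at h0
    split_ifs at h0 <;> first | (exfalso; omega) | linear_combination h0
  -- G1 : the superdiagonal entries and their partners vanish
  have G1 : ∀ s, s < K → ee M X (2 * s + 1) (2 * s + 2) = 0 ∧
      ee M X (2 * s + 1) (M - 1 - 2 * s) = 0 ∧ ee M X (2 * s + 2) (M - 2 * s) = 0 := by
    intro s hs'
    have h1 := Q1 s hs'
    have h2 := Q2 s hs'
    have em := mir (2 * s + 2) (M - 2 * s)
    rw [show M + 1 - (M - 2 * s) = 2 * s + 1 from by omega,
      show M + 1 - (2 * s + 2) = M - 1 - 2 * s from by omega] at em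
    have ha : ee M X (2 * s + 1) (2 * s + 2) = 0 := by
      linear_combination (1 / 2 : ℂ) * h1 + (1 / 2 : ℂ) * h2 - (1 / 2 : ℂ) * em
    have hb : ee M X (2 * s + 1) (M - 1 - 2 * s) = 0 := by linear_combination h1 - ha
    exact ⟨ha, hb, by linear_combination em - hb⟩
  -- G2 : diagonal entries vanish
  have G2 : ∀ s, s < K → ee M X (2 * s + 1) (2 * s + 1) = 0 ∧
      ee M X (2 * s + 2) (2 * s + 2) = 0 := by
    intro s hs'
    have h3 := Q3 s hs'
    have h4 := Q4 s hs'
    constructor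
    · linear_combination (1 / 2 : ℂ) * h4 + (1 / 2 : ℂ) * h3
    · linear_combination (1 / 2 : ℂ) * h4 - (1 / 2 : ℂ) * h3
  -- claimS : strictly upper entries in the S×S block vanish
  have claimS : ∀ i j, 1 ≤ i → i < j → j ≤ 2 * K → ee M X i j = 0 := by
    intro i j hi hij hj
    obtain ⟨v, hv, hiv⟩ : ∃ v, v < K ∧ (i = 2 * v + 1 ∨ i = 2 * v + 2) :=
      ⟨(i - 1) / 2, by omega, by omega⟩
    obtain ⟨u, hu2, hju⟩ : ∃ u, u < K ∧ (j = 2 * u + 1 ∨ j = 2 * u + 2) :=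
      ⟨(j - 1) / 2, by omega, by omega⟩
    rcases hiv with rfl | rfl <;> rcases hju with rfl | rfl
    · have h := Q5 u v hu2 hv
      have hz : ee M X (2 * u + 2) (2 * v + 2) = 0 := up _ _ (by omega)
      linear_combination h - hz
    · rcases eq_or_ne v u with rfl | hne
      · exact (G1 v hv).1
      · have h := Q7 v u hv hu2
        have hz : ee M X (2 * u + 1) (2 * v + 2) = 0 := up _ _ (by omega)
        linear_combination hz - h
    · have h := Q6 v u hv hu2
      have hz : ee M X (2 * u + 2) (2 * v + 1) = 0 := up _ _ (by omega)
      linear_combination h + hz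
    · have h := Q5 v u hv hu2
      have hz : ee M X (2 * u + 1) (2 * v + 1) = 0 := up _ _ (by omega)
      linear_combination h - hz
  -- claimA1 : entries (a, M+1-b) with b < a both small vanish
  have claimA1 : ∀ a b, 1 ≤ b → b < a → a ≤ 2 * K → ee M X a (M + 1 - b) = 0 := by
    intro a b hb hba ha
    obtain ⟨v, hv, hav⟩ : ∃ v, v < K ∧ (a = 2 * v + 1 ∨ a = 2 * v + 2) :=
      ⟨(a - 1) / 2, by omega, by omega⟩
    obtain ⟨s, hsK, hbs⟩ : ∃ s, s < K ∧ (b = 2 * s + 1 ∨ b = 2 * s + 2) :=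
      ⟨(b - 1) / 2, by omega, by omega⟩
    rcases hav with rfl | rfl <;> rcases hbs with rfl | rfl
    · rw [show M + 1 - (2 * s + 1) = M - 2 * s from by omega]
      exact Q10b v s (by omega) hv
    · rw [show M + 1 - (2 * s + 2) = M - 1 - 2 * s from by omega]
      have h := Q10a v s (by omega) hv
      have hz : ee M X (2 * v + 1) (2 * s + 2) = 0 := up _ _ (by omega)
      linear_combination h - hz
    · rw [show M + 1 - (2 * s + 1) = M - 2 * s from by omega]
      have h := Q11b v s (by omega) hv
      rcases eq_or_ne s v with rfl | hne
      · have hg := (G1 s hsK).1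
        linear_combination h - hg
      · have hz : ee M X (2 * v + 1) (2 * s + 2) = 0 := up _ _ (by omega)
        linear_combination h - hz
    · rw [show M + 1 - (2 * s + 2) = M - 1 - 2 * s from by omega]
      have h := Q11a v s (by omega) hv
      have hz1 : ee M X (2 * v + 1) (2 * s + 1) = 0 := up _ _ (by omega)
      have hz2 : ee M X (2 * v + 2) (2 * s + 2) = 0 := up _ _ (by omega)
      linear_combination hz1 - hz2 - h
  -- claimA : all entries with small row index vanish
  have claimA : ∀ i j, 1 ≤ i → i ≤ 2 * K → i ≤ j → j ≤ M → ee M X i j = 0 := by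
    intro i j hi1 hi2 hij hjM
    rcases eq_or_lt_of_le hij with rfl | hlt
    · obtain ⟨v, hv, hiv⟩ : ∃ v, v < K ∧ (i = 2 * v + 1 ∨ i = 2 * v + 2) :=
        ⟨(i - 1) / 2, by omega, by omega⟩
      rcases hiv with rfl | rfl
      · exact (G2 v hv).1
      · exact (G2 v hv).2
    · by_cases hj2 : j ≤ 2 * K
      · exact claimS i j hi1 hlt hj2
      · by_cases hj3 : j + 2 * K ≤ M
        · have h0 := mir i j
          obtain ⟨v, hv, hiv⟩ : ∃ v, v < K ∧ (i = 2 * v + 1 ∨ i = 2 * v + 2) :=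
            ⟨(i - 1) / 2, by omega, by omega⟩
          rcases hiv with rfl | rfl
          · rw [show M + 1 - (2 * v + 1) = M - 2 * v from by omega] at h0
            rw [h0, Q9b (M + 1 - j) v (by omega) (by omega) hv, neg_zero]
          · rw [show M + 1 - (2 * v + 2) = M - 1 - 2 * v from by omega] at h0
            rw [h0, Q9a (M + 1 - j) v (by omega) (by omega) hv, neg_zero]
        · rcases lt_trichotomy (M + 1 - j) i with hlt2 | heq | hgt
          · have h1 := claimA1 i (M + 1 - j) (by omega) hlt2 hi2
            rwa [show M + 1 - (M + 1 - j) = j from by omega] at h1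
          · exact adiag i j (by omega)
          · have h0 := mir i j
            have h1 := claimA1 (M + 1 - j) i hi1 hgt (by omega)
            rw [h0, h1, neg_zero]
  -- conclusion
  ext k l
  have hk := k.2; have hl := l.2
  rw [Matrix.zero_apply, ← ee_apply X k l]
  rcases lt_or_ge (l.1 + 1) (k.1 + 1) with h | h
  · exact up _ _ h
  · by_cases hi2 : k.1 + 1 ≤ 2 * K
    · exact claimA _ _ (by omega) hi2 h (by omega)
    · by_cases hj3 : l.1 + 1 + 2 * K ≤ M
      · exact sup _ _ (by omega) (by omega)
      · rw [mir (k.1 + 1) (l.1 + 1),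
          claimA (M + 1 - (l.1 + 1)) (M + 1 - (k.1 + 1)) (by omega) (by omega) (by omega)
            (by omega), neg_zero]

/-- `L_{K,M}` (with `2K ≤ ⌊M/2⌋`) is a Frobenius Lie algebra, with Frobenius
homomorphism dual (via the trace form) to `(A_{2,1} + A_{4,3} + ⋯) + (A_{M-1,1} + A_{M-3,3} + ⋯)`. -/
theorem LKM_isFrobenius (K M : ℕ) (hK : 2 * K ≤ M / 2) :
    ∀ X ∈ LKM K M, (∀ Y ∈ LKM K M, Matrix.trace (Zmat K M * ⁅X, Y⁆) = 0) → X = 0 := by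
  intro X hX h
  have hM : 4 * K ≤ M := by omega
  have hV : Vprop K M X := LKM_le_V hM hX
  exact main_kill hM hV (key_hC hM hV.2.1 h)
end

section
/- For L = L_{K,M} as above, each bilinear form H_i* ∧ H_j* (with H_i* dual Cartan functionals extended by zero) is a Lie algebra 2-cocycle on L that is not a coboundary; hence the second Lie algebra cohomology H²(L_{K,M}, ℂ) contains Λ²(H*_{K,M}). -/
open Matrix

attribute [local instance 100] LieRing.ofAssociativeRing

/-- The dual Cartan functional `H_i*` (1-based index `i`), extended by zero: on the span
`L_{K,M}` it takes the value `δ_{ij}` on `H_j` and `0` on all `A_{a,b}` with `a < b`. -/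
def Hstar (M i : ℕ) (X : Matrix (Fin M) (Fin M) ℂ) : ℂ :=
  if h : i - 1 < M then 2 * X ⟨i - 1, h⟩ ⟨i - 1, h⟩ else 0

/-- The alternating bilinear form `H_i* ∧ H_j*`. -/
def wedgeHH (M i j : ℕ) (X Y : Matrix (Fin M) (Fin M) ℂ) : ℂ :=
  Hstar M i X * Hstar M j Y - Hstar M j X * Hstar M i Y


lemma eu_bt (M a b : ℕ) (hab : a ≤ b) : (Eu M a b).BlockTriangular id := by
  intro k l h
  have hkl : (l : ℕ) < (k : ℕ) := h
  simp only [Eu, Matrix.of_apply, ite_eq_right_iff, one_ne_zero]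
  intro hc
  omega

def UT (M : ℕ) : LieSubalgebra ℂ (Matrix (Fin M) (Fin M) ℂ) where
  carrier := {X | X.BlockTriangular id}
  add_mem' := fun ha hb => ha.add hb
  zero_mem' := Matrix.blockTriangular_zero
  smul_mem' := fun c _ h k l hkl => by
    rw [Matrix.smul_apply, h hkl, smul_zero]
  lie_mem' := fun {x y} hx hy => by
    rw [Ring.lie_def]
    exact (hx.mul hy).sub (hy.mul hx)

lemma hmat_bt (M a : ℕ) : (Hmat M a).BlockTriangular id := by
  have := ((eu_bt M a a le_rfl).sub (eu_bt M (M+1-a) (M+1-a) le_rfl))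
  intro k l hkl
  rw [Hmat, Matrix.smul_apply, this hkl, smul_zero]

lemma amat_bt (M a b : ℕ) (hab : a ≤ b) : (Amat M a b).BlockTriangular id :=
  (eu_bt M a b hab).sub (eu_bt M (M+1-b) (M+1-a) (by omega))

lemma LKM_le_UT (K M : ℕ) : LKM K M ≤ UT M := by
  rw [LKM, LieSubalgebra.lieSpan_le]
  rintro X (⟨a, _, _, rfl⟩ | ⟨a, b, _, _, hab, _, rfl⟩)
  · exact hmat_bt M a
  · exact amat_bt M a b (le_of_lt hab)

lemma mul_diag {M : ℕ} {X Y : Matrix (Fin M) (Fin M) ℂ} (hX : X.BlockTriangular id)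
    (hY : Y.BlockTriangular id) (p : Fin M) : (X * Y) p p = X p p * Y p p := by
  rw [Matrix.mul_apply]
  apply Finset.sum_eq_single p
  · intro b _ hb
    rcases lt_or_gt_of_ne hb with hlt | hgt
    · rw [hX (show (id b : Fin M) < id p from hlt), zero_mul]
    · rw [hY (show (id p : Fin M) < id b from hgt), mul_zero]
  · intro hp; exact absurd (Finset.mem_univ p) hp

lemma bracket_diag {M : ℕ} {X Y : Matrix (Fin M) (Fin M) ℂ} (hX : X.BlockTriangular id)
    (hY : Y.BlockTriangular id) (p : Fin M) : (⁅X, Y⁆ : Matrix (Fin M) (Fin M) ℂ) p p = 0 := by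
  rw [Ring.lie_def, Matrix.sub_apply, mul_diag hX hY, mul_diag hY hX, mul_comm, sub_self]

lemma hstar_bracket {K M : ℕ} (i : ℕ) {x y : Matrix (Fin M) (Fin M) ℂ}
    (hx : x ∈ LKM K M) (hy : y ∈ LKM K M) : Hstar M i ⁅x, y⁆ = 0 := by
  rw [Hstar]
  split
  · rw [bracket_diag (LKM_le_UT K M hx) (LKM_le_UT K M hy), mul_zero]
  · rfl

lemma hmat_diagonal (M a : ℕ) : Hmat M a = Matrix.diagonal
    (fun p : Fin M => (1/2 : ℂ) * ((if (p:ℕ)+1 = a then 1 else 0)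
      - (if (p:ℕ)+1 = M+1-a then 1 else 0))) := by
  ext k l
  simp only [Hmat, Eu, Matrix.smul_apply, Matrix.sub_apply, Matrix.of_apply, smul_eq_mul,
    Matrix.diagonal_apply]
  by_cases h : k = l
  · subst h; simp
  · have hkl : (k:ℕ) ≠ (l:ℕ) := fun hh => h (Fin.ext hh)
    have h1 : ¬((k:ℕ)+1 = a ∧ (l:ℕ)+1 = a) := by omega
    have h2 : ¬((k:ℕ)+1 = M+1-a ∧ (l:ℕ)+1 = M+1-a) := by omega
    rw [if_neg h1, if_neg h2, if_neg h]
    ring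

lemma hmat_bracket (M a b : ℕ) : (⁅Hmat M a, Hmat M b⁆ : Matrix (Fin M) (Fin M) ℂ) = 0 := by
  rw [Ring.lie_def, hmat_diagonal, hmat_diagonal, Matrix.diagonal_mul_diagonal,
    Matrix.diagonal_mul_diagonal, sub_eq_zero]
  exact congrArg Matrix.diagonal (funext fun p => by ring)

lemma hstar_hmat (M i a : ℕ) (hi : 1 ≤ i) (hiM : 2*i ≤ M) (haM : i + a ≤ M) (ha : a ≤ M) :
    Hstar M i (Hmat M a) = if i = a then 1 else 0 := by
  have hlt : i - 1 < M := by omega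
  rw [Hstar, dif_pos hlt]
  simp only [Hmat, Matrix.smul_apply, Matrix.sub_apply, Eu, Matrix.of_apply, smul_eq_mul]
  have hc : ((⟨i-1, hlt⟩ : Fin M) : ℕ) + 1 = i := by simp; omega
  rw [hc]
  by_cases h : i = a
  · rw [if_pos h, if_pos ⟨h, h⟩, if_neg (by omega : ¬(i = M+1-a ∧ i = M+1-a))]
    norm_num
  · rw [if_neg h, if_neg (by omega : ¬(i = a ∧ i = a)),
      if_neg (by omega : ¬(i = M+1-a ∧ i = M+1-a))]
    norm_num

/-- each `H_i* ∧ H_j*` (with `i ≠ j`, indices in the Cartan range of `L_{K,M}`)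
is a Lie algebra 2-cocycle on `L_{K,M}` that is not a coboundary; hence `H²(L_{K,M}, ℂ)`
contains `Λ²(H*_{K,M})`. -/
theorem wedgeHH_is_cocycle_not_coboundary (K M i j : ℕ) (hK : 2 * K ≤ M / 2)
    (hi : 1 ≤ i) (hi' : i ≤ 2 * K) (hj : 1 ≤ j) (hj' : j ≤ 2 * K) (hij : i ≠ j) :
    (∀ x ∈ LKM K M, ∀ y ∈ LKM K M, ∀ z ∈ LKM K M,
        wedgeHH M i j ⁅x, y⁆ z + wedgeHH M i j ⁅y, z⁆ x + wedgeHH M i j ⁅z, x⁆ y = 0) ∧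
    ¬ ∃ f : Module.Dual ℂ (Matrix (Fin M) (Fin M) ℂ),
        ∀ x ∈ LKM K M, ∀ y ∈ LKM K M, wedgeHH M i j x y = f ⁅x, y⁆ := by
  constructor
  · intro x hx y hy z hz
    simp only [wedgeHH, hstar_bracket i hx hy, hstar_bracket j hx hy,
      hstar_bracket i hy hz, hstar_bracket j hy hz,
      hstar_bracket i hz hx, hstar_bracket j hz hx]
    ring
  · rintro ⟨f, hf⟩
    have hmemi : Hmat M i ∈ LKM K M :=
      LieSubalgebra.subset_lieSpan (Or.inl ⟨i, hi, hi', rfl⟩)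
    have hmemj : Hmat M j ∈ LKM K M :=
      LieSubalgebra.subset_lieSpan (Or.inl ⟨j, hj, hj', rfl⟩)
    have := hf (Hmat M i) hmemi (Hmat M j) hmemj
    rw [hmat_bracket, map_zero] at this
    rw [wedgeHH, hstar_hmat M i i hi (by omega) (by omega) (by omega),
      hstar_hmat M j j hj (by omega) (by omega) (by omega),
      hstar_hmat M i j hi (by omega) (by omega) (by omega),
      hstar_hmat M j i hj (by omega) (by omega) (by omega),
      if_pos rfl, if_pos rfl, if_neg hij, if_neg (Ne.symm hij)] at this
    norm_num at this
end

section
/- If ω is a nondegenerate 2-coboundary on a Lie algebra L and η is a 2-cocycle that is not a coboundary, then for generic scalar t the form ω + tη is a nondegenerate 2-cocycle that is not a coboundary. In particular, A*_{K,M}([·,·]) + ζ_{ij} H_i* ∧ H_j* are nondegenerate 2-cocycles on L_{K,M} for generic ζ_{ij}. -/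
open Matrix

attribute [local instance 100] LieRing.ofAssociativeRing

/-- 2-cocycle condition (with trivial coefficients) for an alternating bilinear form. -/
def IsLieCocycle2 (L : Type*) [LieRing L] [LieAlgebra ℂ L] (ω : L →ₗ[ℂ] L →ₗ[ℂ] ℂ) : Prop :=
  (∀ x : L, ω x x = 0) ∧ ∀ x y z : L, ω ⁅x, y⁆ z + ω ⁅y, z⁆ x + ω ⁅z, x⁆ y = 0

/-- 2-coboundary condition: `ω(x,y) = f ⁅x,y⁆` for some functional `f`. -/
def IsLieCoboundary2 (L : Type*) [LieRing L] [LieAlgebra ℂ L] (ω : L →ₗ[ℂ] L →ₗ[ℂ] ℂ) : Prop :=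
  ∃ f : Module.Dual ℂ L, ∀ x y : L, ω x y = f ⁅x, y⁆

/-- Nondegeneracy of a bilinear form. -/
def IsNondeg (L : Type*) [LieRing L] [LieAlgebra ℂ L] (ω : L →ₗ[ℂ] L →ₗ[ℂ] ℂ) : Prop :=
  ∀ x : L, (∀ y : L, ω x y = 0) → x = 0

/-- `A*_{K,M}([·,·]) + ζ H_i* ∧ H_j*` as a bilinear form on matrices. -/
noncomputable def modifiedForm (K M i j : ℕ) (ζ : ℂ) (X Y : Matrix (Fin M) (Fin M) ℂ) : ℂ :=
  Matrix.trace (Zmat K M * ⁅X, Y⁆)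
    + ζ * (Hstar M i X * Hstar M j Y - Hstar M j X * Hstar M i Y)

theorem cobound_cocycle {L : Type} [LieRing L] [LieAlgebra ℂ L] {ω : L →ₗ[ℂ] L →ₗ[ℂ] ℂ}
    (h : IsLieCoboundary2 L ω) : IsLieCocycle2 L ω := by
  obtain ⟨f, hf⟩ := h
  constructor
  · intro x; rw [hf]; simp
  · intro x y z
    have jac : ⁅⁅x, y⁆, z⁆ + ⁅⁅y, z⁆, x⁆ + ⁅⁅z, x⁆, y⁆ = (0 : L) := by
      have h1 := lie_jacobi x y z
      have e1 : ⁅⁅x, y⁆, z⁆ = -⁅z, ⁅x, y⁆⁆ := (neg_eq_iff_eq_neg.mpr (lie_skew _ _).symm).symm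
      have e2 : ⁅⁅y, z⁆, x⁆ = -⁅x, ⁅y, z⁆⁆ := (neg_eq_iff_eq_neg.mpr (lie_skew _ _).symm).symm
      have e3 : ⁅⁅z, x⁆, y⁆ = -⁅y, ⁅z, x⁆⁆ := (neg_eq_iff_eq_neg.mpr (lie_skew _ _).symm).symm
      rw [e1, e2, e3]
      rw [← neg_add, ← neg_add]
      rw [neg_eq_zero]
      rw [show ⁅z, ⁅x, y⁆⁆ + ⁅x, ⁅y, z⁆⁆ + ⁅y, ⁅z, x⁆⁆
        = ⁅x, ⁅y, z⁆⁆ + ⁅y, ⁅z, x⁆⁆ + ⁅z, ⁅x, y⁆⁆ by abel]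
      exact h1
    rw [hf, hf, hf, ← map_add, ← map_add, jac, map_zero]

theorem part1 (L : Type) [LieRing L] [LieAlgebra ℂ L] [FiniteDimensional ℂ L]
    (ω η : L →ₗ[ℂ] L →ₗ[ℂ] ℂ)
    (hωb : IsLieCoboundary2 L ω) (hωn : IsNondeg L ω) (hηc : IsLieCocycle2 L η)
    (hηb : ¬ IsLieCoboundary2 L η) :
    ∃ bad : Finset ℂ, ∀ t ∉ bad,
      IsNondeg L (ω + t • η) ∧ IsLieCocycle2 L (ω + t • η) ∧ ¬ IsLieCoboundary2 L (ω + t • η) := by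
  classical
  let b := Module.finBasis ℂ L
  obtain ⟨A, hA⟩ : ∃ A, A = LinearMap.BilinForm.toMatrix b ω := ⟨_, rfl⟩
  obtain ⟨Bm, hBm⟩ : ∃ Bm, Bm = LinearMap.BilinForm.toMatrix b η := ⟨_, rfl⟩
  obtain ⟨P, hP⟩ : ∃ P : Matrix _ _ (Polynomial ℂ),
      P = Matrix.of fun a c => Polynomial.C (A a c) + Polynomial.X * Polynomial.C (Bm a c) :=
    ⟨_, rfl⟩
  obtain ⟨p, hp⟩ : ∃ p : Polynomial ℂ, p = P.det := ⟨_, rfl⟩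
  have hev : ∀ t : ℂ, p.eval t = (A + t • Bm).det := by
    intro t
    have h1 : (Polynomial.evalRingHom t) p = (P.map (Polynomial.evalRingHom t)).det := by
      rw [hp]; exact RingHom.map_det _ _
    have h2 : P.map (Polynomial.evalRingHom t) = A + t • Bm := by
      ext a c
      rw [hP]
      simp only [Matrix.map_apply, Matrix.of_apply, Polynomial.coe_evalRingHom,
        Polynomial.eval_add, Polynomial.eval_C, Polynomial.eval_mul, Polynomial.eval_X,
        Matrix.add_apply, Matrix.smul_apply, smul_eq_mul]
    rw [h2] at h1
    simpa using h1
  have hdetA : A.det ≠ 0 := by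
    rw [hA, ← LinearMap.BilinForm.nondegenerate_iff_det_ne_zero b]
    exact LinearMap.BilinForm.Nondegenerate.ofSeparatingLeft hωn
  have hpne : p ≠ 0 := by
    intro h0
    apply hdetA
    have := hev 0
    rw [h0] at this
    simpa using this.symm
  refine ⟨insert 0 p.roots.toFinset, fun t ht => ?_⟩
  have ht0 : t ≠ 0 := fun h => ht (by simp [h])
  have htr : p.eval t ≠ 0 := by
    intro h
    exact ht (Finset.mem_insert_of_mem (Multiset.mem_toFinset.mpr
      ((Polynomial.mem_roots hpne).mpr h)))
  refine ⟨?_, ?_, ?_⟩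
  · have hdet : (LinearMap.BilinForm.toMatrix b (ω + t • η)).det ≠ 0 := by
      rw [map_add, _root_.map_smul, ← hA, ← hBm]
      rw [hev t] at htr
      exact htr
    exact ((LinearMap.BilinForm.nondegenerate_iff_det_ne_zero b).mpr hdet).1
  · have hωc := cobound_cocycle hωb
    constructor
    · intro x
      simp [LinearMap.add_apply, LinearMap.smul_apply, hωc.1 x, hηc.1 x]
    · intro x y z
      simp only [LinearMap.add_apply, LinearMap.smul_apply, smul_eq_mul]
      linear_combination hωc.2 x y z + t * hηc.2 x y z
  · rintro ⟨f, hf⟩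
    obtain ⟨g, hg⟩ := hωb
    apply hηb
    refine ⟨t⁻¹ • (f - g), fun x y => ?_⟩
    have h1 := hf x y
    simp only [LinearMap.add_apply, LinearMap.smul_apply, smul_eq_mul] at h1
    rw [hg] at h1
    simp only [LinearMap.smul_apply, LinearMap.sub_apply, smul_eq_mul]
    rw [inv_mul_eq_div, eq_div_iff ht0]
    linear_combination h1

namespace Frob

variable {K M : ℕ}

/-- upper triangular -/
def UT (X : Matrix (Fin M) (Fin M) ℂ) : Prop := ∀ p q : Fin M, (q : ℕ) < (p : ℕ) → X p q = 0

/-- antidiagonal-orthogonal symmetry -/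
def Sym (X : Matrix (Fin M) (Fin M) ℂ) : Prop := ∀ p q : Fin M, X p q = - X q.rev p.rev

/-- support condition -/
def Supp (K : ℕ) (X : Matrix (Fin M) (Fin M) ℂ) : Prop :=
  ∀ p q : Fin M, 2 * K ≤ (p : ℕ) → (q : ℕ) + 2 * K < M → X p q = 0

@[simp] lemma eu_apply (a b : ℕ) (p q : Fin M) :
    Eu M a b p q = if ((p : ℕ) + 1 = a ∧ (q : ℕ) + 1 = b) then 1 else 0 := rfl

lemma val_rev (p : Fin M) : (Fin.rev p : ℕ) = M - 1 - (p : ℕ) := by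
  rw [Fin.val_rev]; omega

lemma hmat_props (a : ℕ) (ha1 : 1 ≤ a) (ha2 : a ≤ 2 * K) (hKM : 4 * K ≤ M) :
    UT (Hmat M a) ∧ Sym (Hmat M a) ∧ Supp K (Hmat M a) := by
  refine ⟨fun p q h => ?_, fun p q => ?_, fun p q h1 h2 => ?_⟩ <;>
  · have hp := p.isLt
    have hq := q.isLt
    simp only [Hmat, Matrix.smul_apply, Matrix.sub_apply, eu_apply, val_rev, smul_eq_mul]
    split_ifs <;> first | omega | norm_num

lemma amat_props (a b : ℕ) (ha1 : 1 ≤ a) (ha2 : a ≤ 2 * K) (hab : a < b) (hbM : b ≤ M)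
    (hKM : 4 * K ≤ M) :
    UT (Amat M a b) ∧ Sym (Amat M a b) ∧ Supp K (Amat M a b) := by
  refine ⟨fun p q h => ?_, fun p q => ?_, fun p q h1 h2 => ?_⟩ <;>
  · have hp := p.isLt
    have hq := q.isLt
    simp only [Amat, Matrix.sub_apply, eu_apply, val_rev]
    split_ifs <;> first | omega | norm_num

lemma amat_sym (a b : ℕ) (ha1 : 1 ≤ a) (haM : a ≤ M) (hb1 : 1 ≤ b) (hbM : b ≤ M) :
    Sym (Amat M a b) := by
  intro p q
  have hp := p.isLt
  have hq := q.isLt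
  simp only [Amat, Matrix.sub_apply, eu_apply, val_rev]
  split_ifs <;> first | omega | norm_num

lemma sym_zmat (hKM : 4 * K ≤ M) : Sym (Zmat K M) := by
  intro p q
  rw [Zmat, Matrix.sum_apply, Matrix.sum_apply]
  rw [← Finset.sum_neg_distrib]
  refine Finset.sum_congr rfl fun t ht => ?_
  have htK := Finset.mem_range.mp ht
  rw [Matrix.add_apply, Matrix.add_apply]
  have h1 := amat_sym (M := M) (2*t+2) (2*t+1) (by omega) (by omega) (by omega) (by omega) p q
  have h2 := amat_sym (M := M) (M-1-2*t) (2*t+1) (by omega) (by omega) (by omega) (by omega) p q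
  rw [h1, h2]; ring

lemma sym_mul_rev {X Y : Matrix (Fin M) (Fin M) ℂ} (hX : Sym X) (hY : Sym Y) (p q : Fin M) :
    (X * Y) (Fin.rev q) (Fin.rev p) = (Y * X) p q := by
  rw [Matrix.mul_apply, Matrix.mul_apply]
  refine (Fintype.sum_equiv (Fin.revPerm) _ _ fun r => ?_).symm
  simp only [Fin.revPerm_apply]
  rw [hY p r, hX r q]
  ring

lemma sym_bracket {X Y : Matrix (Fin M) (Fin M) ℂ} (hX : Sym X) (hY : Sym Y) :
    Sym (X * Y - Y * X) := by
  intro p q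
  rw [Matrix.sub_apply, Matrix.sub_apply, sym_mul_rev hX hY, sym_mul_rev hY hX]
  ring

lemma ut_mul_sub {X Y : Matrix (Fin M) (Fin M) ℂ} (hX : UT X) (hY : UT Y) :
    UT (X * Y - Y * X) := by
  intro p q h
  rw [Matrix.sub_apply, Matrix.mul_apply, Matrix.mul_apply, ← Finset.sum_sub_distrib]
  refine Finset.sum_eq_zero fun r _ => ?_
  by_cases hr : (r : ℕ) < (p : ℕ)
  · rw [hX p r hr, hY p r hr]; ring
  · rw [hX r q (by omega), hY r q (by omega)]; ring

lemma supp_mul_sub (hKM : 4 * K ≤ M) {X Y : Matrix (Fin M) (Fin M) ℂ}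
    (hX : Supp K X) (hY : Supp K Y) : Supp K (X * Y - Y * X) := by
  intro p q h1 h2
  rw [Matrix.sub_apply, Matrix.mul_apply, Matrix.mul_apply, ← Finset.sum_sub_distrib]
  refine Finset.sum_eq_zero fun r _ => ?_
  by_cases hr : (r : ℕ) + 2 * K < M
  · rw [hX p r h1 hr, hY p r h1 hr]; ring
  · rw [hX r q (by omega) h2, hY r q (by omega) h2]; ring

def goodAlg (K M : ℕ) (hKM : 4 * K ≤ M) : LieSubalgebra ℂ (Matrix (Fin M) (Fin M) ℂ) where
  carrier := {X | UT X ∧ Sym X ∧ Supp K X}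
  add_mem' := by
    rintro X Y ⟨h1, h2, h3⟩ ⟨g1, g2, g3⟩
    refine ⟨fun p q h => ?_, fun p q => ?_, fun p q hp hq => ?_⟩
    · simp [Matrix.add_apply, h1 p q h, g1 p q h]
    · simp only [Matrix.add_apply]
      rw [h2 p q, g2 p q]; ring
    · simp [Matrix.add_apply, h3 p q hp hq, g3 p q hp hq]
  zero_mem' := by
    refine ⟨fun p q h => rfl, fun p q => by simp, fun p q hp hq => rfl⟩
  smul_mem' := by
    rintro c X ⟨h1, h2, h3⟩
    refine ⟨fun p q h => ?_, fun p q => ?_, fun p q hp hq => ?_⟩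
    · simp [Matrix.smul_apply, h1 p q h]
    · simp only [Matrix.smul_apply]
      rw [h2 p q, smul_neg]
    · simp [Matrix.smul_apply, h3 p q hp hq]
  lie_mem' := by
    rintro X Y ⟨h1, h2, h3⟩ ⟨g1, g2, g3⟩
    have hb : ⁅X, Y⁆ = X * Y - Y * X := rfl
    simp only [Set.mem_setOf_eq, hb]
    exact ⟨ut_mul_sub h1 g1, sym_bracket h2 g2, supp_mul_sub hKM h3 g3⟩

lemma lkm_props (hKM : 4 * K ≤ M) {X : Matrix (Fin M) (Fin M) ℂ} (hX : X ∈ LKM K M) :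
    UT X ∧ Sym X ∧ Supp K X := by
  have hle : LKM K M ≤ goodAlg K M hKM := by
    rw [LKM, LieSubalgebra.lieSpan_le]
    rintro Y (⟨a, ha1, ha2, rfl⟩ | ⟨a, b, ha1, ha2, hab, hbM, rfl⟩)
    · exact hmat_props a ha1 ha2 hKM
    · exact amat_props a b ha1 ha2 hab hbM hKM
  exact hle hX

def ent (M : ℕ) (X : Matrix (Fin M) (Fin M) ℂ) (a b : ℕ) : ℂ :=
  if h : a < M ∧ b < M then X ⟨a, h.1⟩ ⟨b, h.2⟩ else 0

lemma ent_eq {X : Matrix (Fin M) (Fin M) ℂ} {a b : ℕ} (ha : a < M) (hb : b < M) :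
    ent M X a b = X ⟨a, ha⟩ ⟨b, hb⟩ := dif_pos ⟨ha, hb⟩

lemma ent_apply {X : Matrix (Fin M) (Fin M) ℂ} (p q : Fin M) :
    X p q = ent M X (p : ℕ) (q : ℕ) := by
  rw [ent_eq p.isLt q.isLt]

lemma ent_ut {X : Matrix (Fin M) (Fin M) ℂ} (hX : UT X) {a b : ℕ} (h : b < a) :
    ent M X a b = 0 := by
  rw [ent]
  split
  · exact hX _ _ h
  · rfl

lemma ent_supp {X : Matrix (Fin M) (Fin M) ℂ} (hX : Supp K X) {a b : ℕ}
    (h1 : 2 * K ≤ a) (h2 : b + 2 * K < M) : ent M X a b = 0 := by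
  rw [ent]
  split
  · exact hX _ _ h1 h2
  · rfl

lemma ent_sym {X : Matrix (Fin M) (Fin M) ℂ} (hX : Sym X) {a b : ℕ} (ha : a < M) (hb : b < M) :
    ent M X a b = - ent M X (M - 1 - b) (M - 1 - a) := by
  rw [ent_eq ha hb, ent_eq (by omega) (by omega), hX ⟨a, ha⟩ ⟨b, hb⟩]
  congr 2 <;> exact Fin.ext (by rw [val_rev])

lemma ent_self0 {X : Matrix (Fin M) (Fin M) ℂ} (hX : Sym X) {a b : ℕ}
    (h : a + b + 1 = M) : ent M X a b = 0 := by
  have h2 := ent_sym hX (a := a) (b := b) (by omega) (by omega)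
  rw [show M - 1 - b = a by omega, show M - 1 - a = b by omega] at h2
  have h3 : ent M X a b + ent M X a b = 0 := by linear_combination h2
  exact add_self_eq_zero.mp h3

lemma eu_mul_ent (X : Matrix (Fin M) (Fin M) ℂ) (a b : ℕ) (hb1 : 1 ≤ b) (hbM : b ≤ M)
    (p q : Fin M) :
    (Eu M a b * X) p q = if (p : ℕ) + 1 = a then ent M X (b - 1) (q : ℕ) else 0 := by
  rw [Matrix.mul_apply]
  by_cases hpa : (p : ℕ) + 1 = a
  · rw [if_pos hpa, ent_eq (by omega) q.isLt]
    rw [Finset.sum_eq_single (⟨b - 1, by omega⟩ : Fin M)]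
    · rw [eu_apply, if_pos ⟨hpa, show b - 1 + 1 = b by omega⟩, one_mul]
    · intro r _ hr
      rw [eu_apply, if_neg, zero_mul]
      rintro ⟨_, h2⟩
      exact hr (Fin.ext (show (r : ℕ) = b - 1 by omega))
    · intro h; exact absurd (Finset.mem_univ _) h
  · rw [if_neg hpa]
    refine Finset.sum_eq_zero fun r _ => ?_
    rw [eu_apply, if_neg, zero_mul]
    rintro ⟨h1, _⟩; exact hpa h1

lemma mul_eu_ent (X : Matrix (Fin M) (Fin M) ℂ) (a b : ℕ) (ha1 : 1 ≤ a) (haM : a ≤ M)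
    (p q : Fin M) :
    (X * Eu M a b) p q = if (q : ℕ) + 1 = b then ent M X (p : ℕ) (a - 1) else 0 := by
  rw [Matrix.mul_apply]
  by_cases hqb : (q : ℕ) + 1 = b
  · rw [if_pos hqb, ent_eq p.isLt (by omega)]
    rw [Finset.sum_eq_single (⟨a - 1, by omega⟩ : Fin M)]
    · rw [eu_apply, if_pos ⟨show a - 1 + 1 = a by omega, hqb⟩, mul_one]
    · intro r _ hr
      rw [eu_apply, if_neg, mul_zero]
      rintro ⟨h1, _⟩
      exact hr (Fin.ext (show (r : ℕ) = a - 1 by omega))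
    · intro h; exact absurd (Finset.mem_univ _) h
  · rw [if_neg hqb]
    refine Finset.sum_eq_zero fun r _ => ?_
    rw [eu_apply, if_neg, mul_zero]
    rintro ⟨_, h2⟩; exact hqb h2

noncomputable def ZXf (K M : ℕ) (X : Matrix (Fin M) (Fin M) ℂ) (p q : Fin M) : ℂ :=
  ∑ t ∈ Finset.range K,
    ((if (p : ℕ) = 2*t+1 then ent M X (2*t) (q : ℕ) else 0)
      + (if (p : ℕ) = M-2*t-2 then ent M X (2*t) (q : ℕ) else 0)
      - (if (p : ℕ) = M-2*t-1 then ent M X (M-2*t-2) (q : ℕ) + ent M X (2*t+1) (q : ℕ) else 0))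

noncomputable def XZf (K M : ℕ) (X : Matrix (Fin M) (Fin M) ℂ) (p q : Fin M) : ℂ :=
  ∑ t ∈ Finset.range K,
    ((if (q : ℕ) = 2*t then ent M X (p : ℕ) (2*t+1) + ent M X (p : ℕ) (M-2*t-2) else 0)
      - (if (q : ℕ) = M-2*t-2 then ent M X (p : ℕ) (M-2*t-1) else 0)
      - (if (q : ℕ) = 2*t+1 then ent M X (p : ℕ) (M-2*t-1) else 0))

lemma zmul (hKM : 4 * K ≤ M) (X : Matrix (Fin M) (Fin M) ℂ) (p q : Fin M) :
    (Zmat K M * X) p q = ZXf K M X p q := by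
  rw [Zmat, Finset.sum_mul, ZXf, Matrix.sum_apply]
  refine Finset.sum_congr rfl fun t ht => ?_
  have htK := Finset.mem_range.mp ht
  have hp := p.isLt
  have e1 : M + 1 - (2*t+1) = M - 2*t := by omega
  have e2 : M + 1 - (2*t+2) = M - 2*t - 1 := by omega
  have e3 : M + 1 - (M-1-2*t) = 2*t+2 := by omega
  rw [Amat, Amat, e1, e2, e3]
  rw [Matrix.add_mul, Matrix.sub_mul, Matrix.sub_mul, Matrix.add_apply, Matrix.sub_apply,
    Matrix.sub_apply]
  rw [eu_mul_ent X _ (2*t+1) (by omega) (by omega),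
    eu_mul_ent X _ (M-2*t-1) (by omega) (by omega),
    eu_mul_ent X _ (2*t+1) (by omega) (by omega),
    eu_mul_ent X _ (2*t+2) (by omega) (by omega)]
  rw [show (2*t+1) - 1 = 2*t by omega, show (M-2*t-1) - 1 = M-2*t-2 by omega,
    show (2*t+2) - 1 = 2*t+1 by omega]
  split_ifs <;> first | omega | ring

lemma xzmul (hKM : 4 * K ≤ M) (X : Matrix (Fin M) (Fin M) ℂ) (p q : Fin M) :
    (X * Zmat K M) p q = XZf K M X p q := by
  rw [Zmat, Finset.mul_sum, XZf, Matrix.sum_apply]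
  refine Finset.sum_congr rfl fun t ht => ?_
  have htK := Finset.mem_range.mp ht
  have hq := q.isLt
  have e1 : M + 1 - (2*t+1) = M - 2*t := by omega
  have e2 : M + 1 - (2*t+2) = M - 2*t - 1 := by omega
  have e3 : M + 1 - (M-1-2*t) = 2*t+2 := by omega
  rw [Amat, Amat, e1, e2, e3]
  rw [Matrix.mul_add, Matrix.mul_sub, Matrix.mul_sub, Matrix.add_apply, Matrix.sub_apply,
    Matrix.sub_apply]
  rw [mul_eu_ent X (2*t+2) _ (by omega) (by omega),
    mul_eu_ent X (M-2*t) _ (by omega) (by omega),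
    mul_eu_ent X (M-1-2*t) _ (by omega) (by omega),
    mul_eu_ent X (M-2*t) _ (by omega) (by omega)]
  rw [show (2*t+2) - 1 = 2*t+1 by omega, show (M-2*t) - 1 = M-2*t-1 by omega,
    show (M-1-2*t) - 1 = M-2*t-2 by omega]
  split_ifs <;> first | omega | ring

lemma trace_mul_eu (B : Matrix (Fin M) (Fin M) ℂ) (a b : Fin M) :
    Matrix.trace (B * Eu M ((a : ℕ) + 1) ((b : ℕ) + 1)) = B b a := by
  simp only [Matrix.trace, Matrix.diag]
  rw [Finset.sum_eq_single b]
  · rw [mul_eu_ent B _ _ (by omega) (by omega), if_pos rfl, Nat.add_sub_cancel,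
      ent_eq b.isLt a.isLt]
  · intro r _ hr
    rw [mul_eu_ent B _ _ (by omega) (by omega), if_neg]
    intro hc
    exact hr (Fin.ext (by omega))
  · intro h; exact absurd (Finset.mem_univ _) h

lemma trace_brack (hKM : 4 * K ≤ M) {X : Matrix (Fin M) (Fin M) ℂ} (hX : Sym X) (a b : Fin M) :
    Matrix.trace (Zmat K M *
        ⁅X, Eu M ((a : ℕ) + 1) ((b : ℕ) + 1) - Eu M ((Fin.rev b : ℕ) + 1) ((Fin.rev a : ℕ) + 1)⁆)
      = 2 * ((Zmat K M * X - X * Zmat K M) b a) := by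
  set Z := Zmat K M with hZ
  set A := Eu M ((a : ℕ) + 1) ((b : ℕ) + 1) - Eu M ((Fin.rev b : ℕ) + 1) ((Fin.rev a : ℕ) + 1)
    with hA
  have hlie : ⁅X, A⁆ = X * A - A * X := Ring.lie_def X A
  have hcyc : Matrix.trace (Z * (A * X)) = Matrix.trace ((X * Z) * A) := by
    rw [← Matrix.mul_assoc, Matrix.trace_mul_comm, ← Matrix.mul_assoc]
  have key : Matrix.trace (Z * ⁅X, A⁆)
      = Matrix.trace ((Z * X) * A) - Matrix.trace ((X * Z) * A) := by
    rw [hlie, Matrix.mul_sub, Matrix.trace_sub, ← Matrix.mul_assoc, hcyc]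
  rw [key, hA, Matrix.mul_sub, Matrix.mul_sub, Matrix.trace_sub, Matrix.trace_sub,
    trace_mul_eu, trace_mul_eu, trace_mul_eu, trace_mul_eu]
  have hsymW : Sym (Z * X - X * Z) := sym_bracket (sym_zmat hKM) hX
  have h1 := hsymW (Fin.rev a) (Fin.rev b)
  rw [Fin.rev_rev, Fin.rev_rev] at h1
  simp only [Matrix.sub_apply] at h1 ⊢
  linear_combination -h1

lemma hstar_amat (n a b : ℕ) (ha1 : 1 ≤ a) (hab : a < b) (hbM : b ≤ M) :
    Hstar M n (Amat M a b) = 0 := by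
  rw [Hstar]
  split
  · next h =>
    simp only [Amat, Matrix.sub_apply, eu_apply]
    rw [if_neg (by omega), if_neg (by omega)]
    ring
  · rfl

section Eval

variable (X : Matrix (Fin M) (Fin M) ℂ) {p q : Fin M} {t : ℕ}
variable (hKM : 4 * K ≤ M)
include hKM

lemma ZXf_odd (ht : t < K) (hp : (p : ℕ) = 2*t+1) :
    ZXf K M X p q = ent M X (2*t) (q : ℕ) := by
  rw [ZXf, Finset.sum_eq_single t]
  · rw [if_pos hp, if_neg (by omega), if_neg (by omega)]; ring
  · intro s hs hst
    have hsK := Finset.mem_range.mp hs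
    rw [if_neg (by omega), if_neg (by omega), if_neg (by omega)]; ring
  · intro h; exact absurd (Finset.mem_range.mpr ht) h

lemma ZXf_le (ht : t < K) (hp : (p : ℕ) = M-2*t-2) :
    ZXf K M X p q = ent M X (2*t) (q : ℕ) := by
  rw [ZXf, Finset.sum_eq_single t]
  · rw [if_pos hp, if_neg (by omega), if_neg (by omega)]; ring
  · intro s hs hst
    have hsK := Finset.mem_range.mp hs
    rw [if_neg (by omega), if_neg (by omega), if_neg (by omega)]; ring
  · intro h; exact absurd (Finset.mem_range.mpr ht) h

lemma ZXf_zero (h : ∀ s, s < K → (p : ℕ) ≠ 2*s+1 ∧ (p : ℕ) ≠ M-2*s-2 ∧ (p : ℕ) ≠ M-2*s-1) :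
    ZXf K M X p q = 0 := by
  rw [ZXf]
  refine Finset.sum_eq_zero fun s hs => ?_
  have hsK := Finset.mem_range.mp hs
  obtain ⟨h1, h2, h3⟩ := h s hsK
  rw [if_neg h1, if_neg h2, if_neg h3]; ring

lemma XZf_even (ht : t < K) (hq : (q : ℕ) = 2*t) :
    XZf K M X p q = ent M X (p : ℕ) (2*t+1) + ent M X (p : ℕ) (M-2*t-2) := by
  rw [XZf, Finset.sum_eq_single t]
  · rw [if_pos hq, if_neg (by omega), if_neg (by omega)]; ring
  · intro s hs hst
    have hsK := Finset.mem_range.mp hs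
    rw [if_neg (by omega), if_neg (by omega), if_neg (by omega)]; ring
  · intro h; exact absurd (Finset.mem_range.mpr ht) h

lemma XZf_odd (ht : t < K) (hq : (q : ℕ) = 2*t+1) :
    XZf K M X p q = - ent M X (p : ℕ) (M-2*t-1) := by
  rw [XZf, Finset.sum_eq_single t]
  · rw [if_pos hq, if_neg (by omega), if_neg (by omega)]; ring
  · intro s hs hst
    have hsK := Finset.mem_range.mp hs
    rw [if_neg (by omega), if_neg (by omega), if_neg (by omega)]; ring
  · intro h; exact absurd (Finset.mem_range.mpr ht) h

end Eval

theorem nondeg_main (hKM : 4 * K ≤ M) (i j : ℕ) (ζ : ℂ) (hi1 : 1 ≤ i) (hi2 : i ≤ 2*K)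
    (hj1 : 1 ≤ j) (hj2 : j ≤ 2*K) (X : Matrix (Fin M) (Fin M) ℂ) (hX : X ∈ LKM K M)
    (hvan : ∀ Y ∈ LKM K M, modifiedForm K M i j ζ X Y = 0) : X = 0 := by
  obtain ⟨hUT, hSym, hSupp⟩ := lkm_props hKM hX
  have hAmem : ∀ a b : ℕ, 1 ≤ a → a ≤ 2*K → a < b → b ≤ M → Amat M a b ∈ LKM K M := by
    intro a b h1 h2 h3 h4
    exact LieSubalgebra.subset_lieSpan (Or.inr ⟨a, b, h1, h2, h3, h4, rfl⟩)
  have hHmem : ∀ a : ℕ, 1 ≤ a → a ≤ 2*K → Hmat M a ∈ LKM K M :=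
    fun a h1 h2 => LieSubalgebra.subset_lieSpan (Or.inl ⟨a, h1, h2, rfl⟩)
  -- equations from pairing with the A generators
  have keyA : ∀ (k l : Fin M), (k : ℕ) < 2*K → (k : ℕ) < (l : ℕ) →
      ZXf K M X l k = XZf K M X l k := by
    intro k l hk hkl
    have h := hvan _ (hAmem ((k : ℕ)+1) ((l : ℕ)+1) (by omega) (by omega) (by omega)
      (by have := l.isLt; omega))
    rw [modifiedForm, hstar_amat _ _ _ (by omega) (by omega) (by have := l.isLt; omega),
      hstar_amat _ _ _ (by omega) (by omega) (by have := l.isLt; omega)] at h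
    have hAeq : Amat M ((k : ℕ)+1) ((l : ℕ)+1)
        = Eu M ((k : ℕ)+1) ((l : ℕ)+1) - Eu M ((Fin.rev l : ℕ)+1) ((Fin.rev k : ℕ)+1) := by
      rw [Amat, val_rev, val_rev,
        show M+1-((l : ℕ)+1) = M-1-(l : ℕ)+1 by have := l.isLt; omega,
        show M+1-((k : ℕ)+1) = M-1-(k : ℕ)+1 by have := k.isLt; omega]
    rw [hAeq, trace_brack hKM hSym] at h
    have h2 : (Zmat K M * X - X * Zmat K M) l k = 0 := by
      have h3 : 2 * ((Zmat K M * X - X * Zmat K M) l k) = 0 := by linear_combination h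
      linear_combination h3 / 2
    rw [Matrix.sub_apply, zmul hKM, xzmul hKM] at h2
    linear_combination h2
  -- diagonal entries vanish
  have diagE : ∀ t, t < K → ent M X (2*t) (2*t) = 0 ∧ ent M X (2*t+1) (2*t+1) = 0 := by
    intro t ht
    have e1 := keyA ⟨2*t, by omega⟩ ⟨2*t+1, by omega⟩ (by simp only [Fin.val_mk]; omega) (by simp only [Fin.val_mk]; omega)
    rw [ZXf_odd X hKM ht rfl, XZf_even X hKM ht rfl] at e1
    have hsp : ent M X (2*t+1) (M-2*t-2) = 0 := ent_self0 hSym (by omega)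
    simp only [Fin.val_mk] at e1
    rw [hsp] at e1
    have e2 := keyA ⟨2*t, by omega⟩ ⟨M-2*t-2, by omega⟩ (by simp only [Fin.val_mk]; omega) (by simp only [Fin.val_mk]; omega)
    rw [ZXf_le X hKM ht rfl, XZf_even X hKM ht rfl] at e2
    have h1 : ent M X (M-2*t-2) (2*t+1) = 0 := ent_ut hUT (by omega)
    have h2 : ent M X (M-2*t-2) (M-2*t-2) = - ent M X (2*t+1) (2*t+1) := by
      rw [ent_sym hSym (by omega) (by omega), show M-1-(M-2*t-2) = 2*t+1 by omega]
    simp only [Fin.val_mk] at e2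
    rw [h1, h2] at e2
    constructor
    · linear_combination (e1 + e2) / 2
    · linear_combination (e2 - e1) / 2
  have diag0 : ∀ c : ℕ, c < 2*K → ent M X c c = 0 := by
    intro c hc
    rcases Nat.even_or_odd c with ⟨t, htc⟩ | ⟨t, htc⟩
    · have := (diagE t (by omega)).1
      rwa [show 2*t = c by omega] at this
    · have := (diagE t (by omega)).2
      rwa [show 2*t+1 = c by omega] at this
  have hstar_iX : Hstar M i X = 0 := by
    have hiM : i - 1 < M := by omega
    rw [Hstar, dif_pos hiM,
      show X ⟨i-1, hiM⟩ ⟨i-1, hiM⟩ = ent M X (i-1) (i-1) from (ent_eq hiM hiM).symm,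
      diag0 (i-1) (by omega), mul_zero]
  have hstar_jX : Hstar M j X = 0 := by
    have hjM : j - 1 < M := by omega
    rw [Hstar, dif_pos hjM,
      show X ⟨j-1, hjM⟩ ⟨j-1, hjM⟩ = ent M X (j-1) (j-1) from (ent_eq hjM hjM).symm,
      diag0 (j-1) (by omega), mul_zero]
  -- equations from pairing with the H generators
  have keyH : ∀ a : Fin M, (a : ℕ) < 2*K → ZXf K M X a a = XZf K M X a a := by
    intro a ha
    have h := hvan _ (hHmem ((a : ℕ)+1) (by omega) (by omega))
    rw [modifiedForm, hstar_iX, hstar_jX] at h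
    have hH : Hmat M ((a : ℕ)+1) = (1/2 : ℂ) •
        (Eu M ((a : ℕ)+1) ((a : ℕ)+1) - Eu M ((Fin.rev a : ℕ)+1) ((Fin.rev a : ℕ)+1)) := by
      rw [Hmat, val_rev, show M+1-((a : ℕ)+1) = M-1-(a : ℕ)+1 by have := a.isLt; omega]
    rw [hH, lie_smul, Matrix.mul_smul, Matrix.trace_smul, trace_brack hKM hSym a a] at h
    have h2 : (Zmat K M * X - X * Zmat K M) a a = 0 := by
      simp only [smul_eq_mul] at h
      linear_combination h
    rw [Matrix.sub_apply, zmul hKM, xzmul hKM] at h2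
    linear_combination h2
  -- the u and v entries vanish
  have uv : ∀ t, t < K → ent M X (2*t) (2*t+1) = 0 ∧ ent M X (2*t) (M-2*t-2) = 0 := by
    intro t ht
    have e1 := keyH ⟨2*t, by omega⟩ (by simp only [Fin.val_mk]; omega)
    rw [XZf_even X hKM ht rfl, ZXf_zero X hKM (by intro s hs; simp only [Fin.val_mk]; omega)] at e1
    simp only [Fin.val_mk] at e1
    have e2 := keyH ⟨2*t+1, by omega⟩ (by simp only [Fin.val_mk]; omega)
    rw [ZXf_odd X hKM ht rfl, XZf_odd X hKM ht rfl] at e2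
    simp only [Fin.val_mk] at e2
    have h1 : ent M X (2*t+1) (M-2*t-1) = - ent M X (2*t) (M-2*t-2) := by
      rw [ent_sym hSym (by omega) (by omega), show M-1-(M-2*t-1) = 2*t by omega,
        show M-1-(2*t+1) = M-2*t-2 by omega]
    rw [h1] at e2
    constructor
    · linear_combination (e2 - e1) / 2
    · linear_combination (-e2 - e1) / 2
  -- main case: large columns, rows below the special range
  have colLe : ∀ t, t < K → ∀ a : ℕ, 2*t < a → a < M-2*t-2 → ent M X a (M-2*t-2) = 0 := by
    intro t ht a ha1 ha2
    have e := keyA ⟨2*t, by omega⟩ ⟨a, by omega⟩ (by simp only [Fin.val_mk]; omega) (by simp only [Fin.val_mk]; omega)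
    rw [XZf_even X hKM ht rfl] at e
    have hz : ZXf K M X ⟨a, by omega⟩ ⟨2*t, by omega⟩ = 0 := by
      rw [ZXf]
      simp only [Fin.val_mk]
      refine Finset.sum_eq_zero fun s hs => ?_
      have hsK := Finset.mem_range.mp hs
      by_cases c1 : a = 2*s+1
      · rw [if_pos c1, if_neg (by omega), if_neg (by omega)]
        rcases Nat.lt_or_ge (2*t) (2*s) with h | h
        · rw [ent_ut hUT h]; ring
        · rw [show 2*s = 2*t by omega, (diagE t ht).1]; ring
      · rw [if_neg c1]
        by_cases c2 : a = M-2*s-2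
        · rw [if_pos c2, if_neg (by omega), ent_ut hUT (by omega)]; ring
        · rw [if_neg c2]
          by_cases c3 : a = M-2*s-1
          · rw [if_pos c3, ent_ut hUT (by omega), ent_ut hUT (by omega)]; ring
          · rw [if_neg c3]; ring
    rw [hz] at e
    simp only [Fin.val_mk] at e
    have h1 : ent M X a (2*t+1) = 0 := by
      rcases Nat.lt_or_ge (2*t+1) a with h | h
      · exact ent_ut hUT h
      · rw [show a = 2*t+1 by omega]; exact (diagE t ht).2
    rw [h1] at e
    linear_combination -e
  have colLo : ∀ t, t < K → ∀ a : ℕ, 2*t+1 < a → a < M-2*t-1 → ent M X a (M-2*t-1) = 0 := by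
    intro t ht a ha1 ha2
    have e := keyA ⟨2*t+1, by omega⟩ ⟨a, by omega⟩ (by simp only [Fin.val_mk]; omega) (by simp only [Fin.val_mk]; omega)
    rw [XZf_odd X hKM ht rfl] at e
    have hz : ZXf K M X ⟨a, by omega⟩ ⟨2*t+1, by omega⟩ = 0 := by
      rw [ZXf]
      simp only [Fin.val_mk]
      refine Finset.sum_eq_zero fun s hs => ?_
      have hsK := Finset.mem_range.mp hs
      by_cases c1 : a = 2*s+1
      · rw [if_pos c1, if_neg (by omega), if_neg (by omega), ent_ut hUT (by omega)]; ring
      · rw [if_neg c1]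
        by_cases c2 : a = M-2*s-2
        · rw [if_pos c2, if_neg (by omega)]
          rcases Nat.lt_or_ge t s with h | h
          · rw [ent_ut hUT (by omega)]; ring
          · rw [show 2*s = 2*t by omega, (uv t ht).1]; ring
        · rw [if_neg c2]
          by_cases c3 : a = M-2*s-1
          · rw [if_pos c3, ent_ut hUT (by omega), ent_ut hUT (by omega)]; ring
          · rw [if_neg c3]; ring
    rw [hz] at e
    simp only [Fin.val_mk] at e
    linear_combination e
  -- full column lemmas
  have colLeF : ∀ t, t < K → ∀ a : ℕ, a < M-2*t-2 → ent M X a (M-2*t-2) = 0 := by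
    intro t ht a ha
    rcases Nat.lt_trichotomy (2*t) a with h | h | h
    · exact colLe t ht a h ha
    · rw [← h]; exact (uv t ht).2
    · rw [ent_sym hSym (by omega) (by omega), show M-1-(M-2*t-2) = 2*t+1 by omega]
      rcases Nat.even_or_odd a with ⟨s, hsa⟩ | ⟨s, hsa⟩
      · rw [show M-1-a = M-2*s-1 by omega, colLo s (by omega) (2*t+1) (by omega) (by omega)]
        ring
      · rw [show M-1-a = M-2*s-2 by omega, colLe s (by omega) (2*t+1) (by omega) (by omega)]
        ring
  have colLoF : ∀ t, t < K → ∀ a : ℕ, a < M-2*t-1 → ent M X a (M-2*t-1) = 0 := by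
    intro t ht a ha
    rcases Nat.lt_or_ge (2*t+1) a with h | h
    · exact colLo t ht a h ha
    rcases Nat.lt_trichotomy a (2*t) with h2 | h2 | h2
    · rw [ent_sym hSym (by omega) (by omega), show M-1-(M-2*t-1) = 2*t by omega]
      rcases Nat.even_or_odd a with ⟨s, hsa⟩ | ⟨s, hsa⟩
      · rw [show M-1-a = M-2*s-1 by omega, colLo s (by omega) (2*t) (by omega) (by omega)]
        ring
      · rw [show M-1-a = M-2*s-2 by omega, colLe s (by omega) (2*t) (by omega) (by omega)]
        ring
    · rw [h2]; exact ent_self0 hSym (by omega)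
    · rw [show a = 2*t+1 by omega, ent_sym hSym (by omega) (by omega),
        show M-1-(M-2*t-1) = 2*t by omega, show M-1-(2*t+1) = M-2*t-2 by omega,
        (uv t ht).2]
      ring
  -- conclusion
  ext p q
  rw [Matrix.zero_apply, ent_apply (X := X) p q]
  have hp := p.isLt
  have hq := q.isLt
  rcases Nat.lt_trichotomy (p : ℕ) (q : ℕ) with h | h | h
  · by_cases hql : M ≤ (q : ℕ) + 2*K
    · -- q is a large column
      rcases Nat.even_or_odd (M-1-(q : ℕ)) with ⟨s, hsa⟩ | ⟨s, hsa⟩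
      · rw [show (q : ℕ) = M-2*s-1 by omega]
        exact colLoF s (by omega) _ (by omega)
      · rw [show (q : ℕ) = M-2*s-2 by omega]
        exact colLeF s (by omega) _ (by omega)
    · by_cases hpl : (p : ℕ) < 2*K
      · rw [ent_sym hSym (by omega) (by omega)]
        rcases Nat.even_or_odd (p : ℕ) with ⟨s, hsa⟩ | ⟨s, hsa⟩
        · rw [show M-1-(p : ℕ) = M-2*s-1 by omega,
            colLo s (by omega) (M-1-(q : ℕ)) (by omega) (by omega)]
          ring
        · rw [show M-1-(p : ℕ) = M-2*s-2 by omega,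
            colLe s (by omega) (M-1-(q : ℕ)) (by omega) (by omega)]
          ring
      · exact ent_supp hSupp (by omega) (by omega)
  · rw [← h]
    by_cases hpl : (p : ℕ) < 2*K
    · exact diag0 _ hpl
    by_cases hpl2 : M ≤ (p : ℕ) + 2*K
    · rw [ent_sym hSym (by omega) (by omega), diag0 (M-1-(p : ℕ)) (by omega)]
      ring
    · exact ent_supp hSupp (by omega) (by omega)
  · exact ent_ut hUT h

lemma lie3 {R : Type*} [LieRing R] (x y z : R) :
    ⁅⁅x, y⁆, z⁆ + ⁅⁅y, z⁆, x⁆ + ⁅⁅z, x⁆, y⁆ = 0 := by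
  have h1 := lie_jacobi x y z
  have e1 : ⁅⁅x, y⁆, z⁆ = -⁅z, ⁅x, y⁆⁆ := (neg_eq_iff_eq_neg.mpr (lie_skew _ _).symm).symm
  have e2 : ⁅⁅y, z⁆, x⁆ = -⁅x, ⁅y, z⁆⁆ := (neg_eq_iff_eq_neg.mpr (lie_skew _ _).symm).symm
  have e3 : ⁅⁅z, x⁆, y⁆ = -⁅y, ⁅z, x⁆⁆ := (neg_eq_iff_eq_neg.mpr (lie_skew _ _).symm).symm
  rw [e1, e2, e3, ← neg_add, ← neg_add, neg_eq_zero,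
    show ⁅z, ⁅x, y⁆⁆ + ⁅x, ⁅y, z⁆⁆ + ⁅y, ⁅z, x⁆⁆
      = ⁅x, ⁅y, z⁆⁆ + ⁅y, ⁅z, x⁆⁆ + ⁅z, ⁅x, y⁆⁆ by abel]
  exact h1

lemma diag_brack {x y : Matrix (Fin M) (Fin M) ℂ} (hx : UT x) (hy : UT y) (c : Fin M) :
    (⁅x, y⁆ : Matrix (Fin M) (Fin M) ℂ) c c = 0 := by
  rw [Ring.lie_def, Matrix.sub_apply, Matrix.mul_apply, Matrix.mul_apply,
    ← Finset.sum_sub_distrib]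
  refine Finset.sum_eq_zero fun r _ => ?_
  rcases Nat.lt_trichotomy (r : ℕ) (c : ℕ) with h | h | h
  · rw [hx c r h, hy c r h]; ring
  · rw [Fin.ext h]; ring
  · rw [hx r c h, hy r c h]; ring

lemma hstar_brack {x y : Matrix (Fin M) (Fin M) ℂ} (hx : UT x) (hy : UT y) (n : ℕ) :
    Hstar M n ⁅x, y⁆ = 0 := by
  rw [Hstar]
  split
  · rw [diag_brack hx hy]; ring
  · rfl

theorem cocycle_main (hKM : 4 * K ≤ M) (i j : ℕ) (ζ : ℂ) :
    ∀ x ∈ LKM K M, ∀ y ∈ LKM K M, ∀ z ∈ LKM K M,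
      modifiedForm K M i j ζ ⁅x, y⁆ z + modifiedForm K M i j ζ ⁅y, z⁆ x
        + modifiedForm K M i j ζ ⁅z, x⁆ y = 0 := by
  intro x hx y hy z hz
  obtain ⟨hxU, -, -⟩ := lkm_props hKM hx
  obtain ⟨hyU, -, -⟩ := lkm_props hKM hy
  obtain ⟨hzU, -, -⟩ := lkm_props hKM hz
  rw [modifiedForm, modifiedForm, modifiedForm,
    hstar_brack hxU hyU i, hstar_brack hxU hyU j,
    hstar_brack hyU hzU i, hstar_brack hyU hzU j,
    hstar_brack hzU hxU i, hstar_brack hzU hxU j]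
  have htr : Matrix.trace (Zmat K M * ⁅⁅x, y⁆, z⁆) + Matrix.trace (Zmat K M * ⁅⁅y, z⁆, x⁆)
      + Matrix.trace (Zmat K M * ⁅⁅z, x⁆, y⁆) = 0 := by
    rw [← Matrix.trace_add, ← Matrix.trace_add, ← Matrix.mul_add, ← Matrix.mul_add, lie3,
      Matrix.mul_zero, Matrix.trace_zero]
  linear_combination htr

end Frob

/-- if `ω` is a nondegenerate 2-coboundary on a finite-dimensional complex Lie
algebra `L` and `η` is a 2-cocycle that is not a coboundary, then for generic `t` (all `t`
outside a finite set) `ω + tη` is a nondegenerate 2-cocycle that is not a coboundary.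
In particular, `A*_{K,M}([·,·]) + ζ H_i* ∧ H_j*` are nondegenerate 2-cocycles on `L_{K,M}`
for generic `ζ`. -/
theorem generic_perturbation_nondeg_cocycle :
    (∀ (L : Type) [LieRing L] [LieAlgebra ℂ L] [FiniteDimensional ℂ L]
        (ω η : L →ₗ[ℂ] L →ₗ[ℂ] ℂ),
      IsLieCoboundary2 L ω → IsNondeg L ω → IsLieCocycle2 L η → ¬ IsLieCoboundary2 L η →
      ∃ bad : Finset ℂ, ∀ t ∉ bad,
        IsNondeg L (ω + t • η) ∧ IsLieCocycle2 L (ω + t • η) ∧ ¬ IsLieCoboundary2 L (ω + t • η)) ∧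
    (∀ K M i j : ℕ, 2 * K ≤ M / 2 → 1 ≤ i → i ≤ 2 * K → 1 ≤ j → j ≤ 2 * K → i ≠ j →
      ∃ bad : Finset ℂ, ∀ ζ ∉ bad,
        (∀ X ∈ LKM K M, (∀ Y ∈ LKM K M, modifiedForm K M i j ζ X Y = 0) → X = 0) ∧
        (∀ x ∈ LKM K M, ∀ y ∈ LKM K M, ∀ z ∈ LKM K M,
          modifiedForm K M i j ζ ⁅x, y⁆ z + modifiedForm K M i j ζ ⁅y, z⁆ x
            + modifiedForm K M i j ζ ⁅z, x⁆ y = 0)) := by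
  constructor
  · exact part1
  · intro K M i j hKM hi1 hi2 hj1 hj2 hij
    have hKM4 : 4 * K ≤ M := by omega
    refine ⟨∅, fun ζ _ => ⟨?_, ?_⟩⟩
    · intro X hX hvan
      exact Frob.nondeg_main hKM4 i j ζ hi1 hi2 hj1 hj2 X hX hvan
    · exact Frob.cocycle_main hKM4 i j ζ
end
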